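/- arXiv:1709.06736 — 8 statements merged into one kernel-verified Lean document; each statement's English description precedes it below -/
import Mathlib

section
/- Let h be a Hessenberg function on {1,…,n} and let T be a sink set of Γ_h with |T| = k. Then h_T is a Hessenberg function on {1,…,n−k} (i.e., h_T(r) ≥ r for all r and h_T(r) ≤ h_T(r+1) for all r < n−k), and for all i, j ∉ T with j < i, {j,i} is an edge of Γ_h if and only if φ_T(i) ≤ h_T(φ_T(j)); that is, the induced subgraph of Γ_h on {1,…,n}∖T is isomorphic, via φ_T, to the incomparability graph Γ_{h_T}. -/
open scoped Classical

/-- `h` is a Hessenberg function on `{1,…,n}`. -/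
def IsHessenberg (n : ℕ) (h : ℕ → ℕ) : Prop :=
  (∀ i, 1 ≤ i → i ≤ n → i ≤ h i ∧ h i ≤ n) ∧
  (∀ i, 1 ≤ i → i < n → h i ≤ h (i + 1))

/-- `{j,i}` (with `j < i`) is an edge of the incomparability graph `Γ_h`. -/
def IsEdge (n : ℕ) (h : ℕ → ℕ) (j i : ℕ) : Prop :=
  1 ≤ j ∧ j < i ∧ i ≤ n ∧ i ≤ h j

/-- The orientation `ω` directs the edge between `u` and `v` from `u` to `v`. -/
def Dir (n : ℕ) (h : ℕ → ℕ) (ω : ℕ → ℕ → Bool) (u v : ℕ) : Prop :=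
  (IsEdge n h u v ∧ ω u v = true) ∨ (IsEdge n h v u ∧ ω v u = false)

/-- `ω` is an acyclic orientation of `Γ_h`. -/
def AcyclicOr (n : ℕ) (h : ℕ → ℕ) (ω : ℕ → ℕ → Bool) : Prop :=
  ∀ v, ¬ Relation.TransGen (Dir n h ω) v v

/-- `v` is a sink of the orientation `ω`. -/
def IsSinkAt (n : ℕ) (h : ℕ → ℕ) (ω : ℕ → ℕ → Bool) (v : ℕ) : Prop :=
  ∀ u, IsEdge n h u v ∨ IsEdge n h v u → Dir n h ω u v

/-- `sk(ω)`, the set of sinks of `ω`. -/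
noncomputable def sinks (n : ℕ) (h : ℕ → ℕ) (ω : ℕ → ℕ → Bool) : Finset ℕ :=
  (Finset.Icc 1 n).filter (fun v => IsSinkAt n h ω v)

/-- `T` is a sink set of `Γ_h`. -/
def IsSinkSet (n : ℕ) (h : ℕ → ℕ) (T : Finset ℕ) : Prop :=
  ∃ ω, AcyclicOr n h ω ∧ sinks n h ω = T

/-- `φ_T(j) = j − #{t ∈ T : t ≤ j}`. -/
def phiT (T : Finset ℕ) (j : ℕ) : ℕ := j - (T.filter (fun t => t ≤ j)).card

/-- The inverse of `φ_T` on `{1,…,n} ∖ T`. -/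
noncomputable def psiT (n : ℕ) (T : Finset ℕ) (r : ℕ) : ℕ :=
  sInf {i | 1 ≤ i ∧ i ≤ n ∧ i ∉ T ∧ phiT T i = r}

/-- The induced Hessenberg function `h_T`, defined by `h_T(φ_T(i)) = φ_T(h(i))` for `i ∉ T`. -/
noncomputable def hFunT (n : ℕ) (h : ℕ → ℕ) (T : Finset ℕ) (r : ℕ) : ℕ :=
  phiT T (h (psiT n T r))

section Aux

variable {n : ℕ} {T : Finset ℕ}

/-- number of elements of `T` that are `≤ m`. -/
private def cT (T : Finset ℕ) (m : ℕ) : ℕ := (T.filter (fun t => t ≤ m)).card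

lemma phiT_eq (m : ℕ) : phiT T m = m - cT T m := rfl

lemma cT_mono {m m' : ℕ} (hmm : m ≤ m') : cT T m ≤ cT T m' := by
  apply Finset.card_le_card
  intro t ht
  simp only [Finset.mem_filter] at ht ⊢
  exact ⟨ht.1, le_trans ht.2 hmm⟩

lemma cT_le_add {m m' : ℕ} (hmm : m ≤ m') : cT T m' ≤ cT T m + (m' - m) := by
  have hsub : T.filter (fun t => t ≤ m') ⊆ T.filter (fun t => t ≤ m) ∪ Finset.Ioc m m' := by
    intro t ht
    simp only [Finset.mem_filter] at ht
    rcases le_or_gt t m with h1 | h1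
    · exact Finset.mem_union_left _ (Finset.mem_filter.2 ⟨ht.1, h1⟩)
    · exact Finset.mem_union_right _ (Finset.mem_Ioc.2 ⟨h1, ht.2⟩)
  calc cT T m' ≤ (T.filter (fun t => t ≤ m) ∪ Finset.Ioc m m').card :=
        Finset.card_le_card hsub
    _ ≤ cT T m + (Finset.Ioc m m').card := Finset.card_union_le _ _
    _ = cT T m + (m' - m) := by rw [Nat.card_Ioc]

lemma cT_le_add' {m i : ℕ} (hmi : m < i) (hiT : i ∉ T) :
    cT T i ≤ cT T m + (i - 1 - m) := by
  have hsub : T.filter (fun t => t ≤ i) ⊆ T.filter (fun t => t ≤ m) ∪ Finset.Ioc m (i - 1) := by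
    intro t ht
    simp only [Finset.mem_filter] at ht
    rcases le_or_gt t m with h1 | h1
    · exact Finset.mem_union_left _ (Finset.mem_filter.2 ⟨ht.1, h1⟩)
    · refine Finset.mem_union_right _ (Finset.mem_Ioc.2 ⟨h1, ?_⟩)
      have : t ≠ i := fun he => hiT (he ▸ ht.1)
      omega
  calc cT T i ≤ (T.filter (fun t => t ≤ m) ∪ Finset.Ioc m (i - 1)).card :=
        Finset.card_le_card hsub
    _ ≤ cT T m + (Finset.Ioc m (i - 1)).card := Finset.card_union_le _ _
    _ = cT T m + (i - 1 - m) := by rw [Nat.card_Ioc]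

lemma cT_le_self (hT : T ⊆ Finset.Icc 1 n) (m : ℕ) : cT T m ≤ m := by
  have hsub : T.filter (fun t => t ≤ m) ⊆ Finset.Icc 1 m := by
    intro t ht
    simp only [Finset.mem_filter] at ht
    have h1 := Finset.mem_Icc.1 (hT ht.1)
    exact Finset.mem_Icc.2 ⟨h1.1, ht.2⟩
  calc cT T m ≤ (Finset.Icc 1 m).card := Finset.card_le_card hsub
    _ = m := by rw [Nat.card_Icc]; omega

lemma cT_le_pred (hT : T ⊆ Finset.Icc 1 n) {i : ℕ} (hi1 : 1 ≤ i) (hiT : i ∉ T) :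
    cT T i ≤ i - 1 := by
  have hsub : T.filter (fun t => t ≤ i) ⊆ Finset.Icc 1 (i - 1) := by
    intro t ht
    simp only [Finset.mem_filter] at ht
    have h1 := Finset.mem_Icc.1 (hT ht.1)
    have : t ≠ i := fun he => hiT (he ▸ ht.1)
    exact Finset.mem_Icc.2 ⟨h1.1, by omega⟩
  calc cT T i ≤ (Finset.Icc 1 (i - 1)).card := Finset.card_le_card hsub
    _ = i - 1 := by rw [Nat.card_Icc]; omega

lemma phiT_mono {m m' : ℕ} (hmm : m ≤ m') : phiT T m ≤ phiT T m' := by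
  have h1 : cT T m ≤ cT T m' := cT_mono hmm
  have h2 : cT T m' ≤ cT T m + (m' - m) := cT_le_add hmm
  rw [phiT_eq, phiT_eq]
  omega

lemma phiT_strict (hT : T ⊆ Finset.Icc 1 n) {m i : ℕ} (hmi : m < i) (hiT : i ∉ T) :
    phiT T m < phiT T i := by
  have h1 : cT T m ≤ cT T i := cT_mono (le_of_lt hmi)
  have h2 : cT T i ≤ cT T m + (i - 1 - m) := cT_le_add' hmi hiT
  have h3 : cT T m ≤ m := cT_le_self hT m
  rw [phiT_eq, phiT_eq]
  omega

lemma phiT_ge_one (hT : T ⊆ Finset.Icc 1 n) {i : ℕ} (hi1 : 1 ≤ i) (hiT : i ∉ T) :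
    1 ≤ phiT T i := by
  have := cT_le_pred hT hi1 hiT
  rw [phiT_eq]
  omega

lemma phiT_top (hT : T ⊆ Finset.Icc 1 n) : phiT T n = n - T.card := by
  rw [phiT_eq]
  have hc : cT T n = T.card := by
    unfold cT
    congr 1
    apply Finset.filter_true_of_mem
    intro t ht
    exact (Finset.mem_Icc.1 (hT ht)).2
  rw [hc]

lemma psiT_phiT (hT : T ⊆ Finset.Icc 1 n) {j : ℕ} (hj1 : 1 ≤ j) (hjn : j ≤ n)
    (hjT : j ∉ T) : psiT n T (phiT T j) = j := by
  have hset : {i | 1 ≤ i ∧ i ≤ n ∧ i ∉ T ∧ phiT T i = phiT T j} = {j} := by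
    ext i
    simp only [Set.mem_setOf_eq, Set.mem_singleton_iff]
    constructor
    · rintro ⟨hi1, hin, hiT, hphi⟩
      rcases lt_trichotomy i j with hlt | heq | hgt
      · exact absurd hphi (ne_of_lt (phiT_strict hT hlt hjT))
      · exact heq
      · exact absurd hphi.symm (ne_of_lt (phiT_strict hT hgt hiT))
    · rintro rfl
      exact ⟨hj1, hjn, hjT, rfl⟩
  rw [psiT, hset, csInf_singleton]

lemma phiT_surj (hT : T ⊆ Finset.Icc 1 n) {r : ℕ} (hr1 : 1 ≤ r) (hrn : r ≤ n - T.card) :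
    ∃ i, 1 ≤ i ∧ i ≤ n ∧ i ∉ T ∧ phiT T i = r := by
  have hcards : (Finset.Icc 1 (n - T.card)).card ≤ ((Finset.Icc 1 n) \ T).card := by
    rw [Finset.card_sdiff_of_subset hT, Nat.card_Icc, Nat.card_Icc]
    omega
  have key := Finset.surj_on_of_inj_on_of_card_le
    (s := (Finset.Icc 1 n) \ T) (t := Finset.Icc 1 (n - T.card))
    (fun i _ => phiT T i)
    (fun a ha => by
      simp only [Finset.mem_sdiff, Finset.mem_Icc] at ha
      refine Finset.mem_Icc.2 ⟨phiT_ge_one hT ha.1.1 ha.2, ?_⟩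
      calc phiT T a ≤ phiT T n := phiT_mono ha.1.2
        _ = n - T.card := phiT_top hT)
    (fun a₁ a₂ ha₁ ha₂ he => by
      simp only [Finset.mem_sdiff, Finset.mem_Icc] at ha₁ ha₂
      by_contra hne
      rcases lt_or_gt_of_ne hne with hlt | hgt
      · exact absurd he (ne_of_lt (phiT_strict hT hlt ha₂.2))
      · exact absurd he.symm (ne_of_lt (phiT_strict hT hgt ha₁.2)))
    hcards
  obtain ⟨a, ha, hae⟩ := key r (Finset.mem_Icc.2 ⟨hr1, hrn⟩)
  simp only [Finset.mem_sdiff, Finset.mem_Icc] at ha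
  exact ⟨a, ha.1.1, ha.1.2, ha.2, hae.symm⟩

lemma psiT_mem (hT : T ⊆ Finset.Icc 1 n) {r : ℕ} (hr1 : 1 ≤ r) (hrn : r ≤ n - T.card) :
    1 ≤ psiT n T r ∧ psiT n T r ≤ n ∧ psiT n T r ∉ T ∧ phiT T (psiT n T r) = r := by
  have hne : {i | 1 ≤ i ∧ i ≤ n ∧ i ∉ T ∧ phiT T i = r}.Nonempty := by
    obtain ⟨i, hi⟩ := phiT_surj hT hr1 hrn
    exact ⟨i, hi⟩
  exact Nat.sInf_mem hne

lemma hmono {h : ℕ → ℕ} (hh : IsHessenberg n h) {a b : ℕ} (ha : 1 ≤ a) (hab : a ≤ b)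
    (hb : b ≤ n) : h a ≤ h b := by
  induction b with
  | zero => omega
  | succ b ih =>
    rcases Nat.eq_or_lt_of_le hab with heq | hlt
    · rw [heq]
    · have hab' : a ≤ b := by omega
      have h1 : h a ≤ h b := ih hab' (by omega)
      have h2 : h b ≤ h (b + 1) := hh.2 b (by omega) (by omega)
      omega

end Aux

theorem stmt1 (n k : ℕ) (h : ℕ → ℕ) (hn : 1 ≤ n) (hh : IsHessenberg n h)
    (T : Finset ℕ) (hTss : IsSinkSet n h T) (hcard : T.card = k) :
    IsHessenberg (n - k) (hFunT n h T) ∧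
    (∀ i j, 1 ≤ j → j < i → i ≤ n → i ∉ T → j ∉ T →
      (IsEdge n h j i ↔ phiT T i ≤ hFunT n h T (phiT T j))) := by
  have hT : T ⊆ Finset.Icc 1 n := by
    obtain ⟨ω, hω, hs⟩ := hTss
    rw [← hs]
    exact Finset.filter_subset _ _
  subst hcard
  constructor
  · constructor
    · intro r hr1 hrn
      obtain ⟨hi1, hin, hiT, hphi⟩ := psiT_mem hT hr1 hrn
      set i := psiT n T r
      have hhi := hh.1 i hi1 hin
      constructor
      · calc r = phiT T i := hphi.symm
          _ ≤ phiT T (h i) := phiT_mono hhi.1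
      · calc hFunT n h T r = phiT T (h i) := rfl
          _ ≤ phiT T n := phiT_mono hhi.2
          _ = n - T.card := phiT_top hT
    · intro r hr1 hrn
      have H1 := psiT_mem (n := n) (T := T) hT hr1 (by omega)
      have H2 := psiT_mem (n := n) (T := T) (r := r + 1) hT (by omega) (by omega)
      set i := psiT n T r with hi_def
      set i' := psiT n T (r + 1) with hi'_def
      obtain ⟨hi1, hin, hiT, hphi⟩ := H1
      obtain ⟨hi1', hin', hiT', hphi'⟩ := H2
      have hii' : i < i' := by
        rcases lt_trichotomy i i' with hlt | heq | hgt
        · exact hlt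
        · rw [heq, hphi'] at hphi; omega
        · have := phiT_strict hT hgt hiT
          rw [hphi, hphi'] at this; omega
      have : h i ≤ h i' := hmono hh hi1 (le_of_lt hii') hin'
      exact phiT_mono this
  · intro i j hj1 hji hin hiT hjT
    have hjn : j ≤ n := by omega
    have hψ : psiT n T (phiT T j) = j := psiT_phiT hT hj1 hjn hjT
    have hfun : hFunT n h T (phiT T j) = phiT T (h j) := by rw [hFunT, hψ]
    rw [hfun]
    constructor
    · rintro ⟨-, -, -, hhj⟩
      exact phiT_mono hhj
    · intro hle
      refine ⟨hj1, hji, hin, ?_⟩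
      by_contra hcon
      push_neg at hcon
      have := phiT_strict hT hcon hiT
      omega
end

section
/- Let h be a Hessenberg function on {1,…,n}, let m = m(Γ_h) be the maximum sink-set size, and let T be a sink set of Γ_h with |T| = m. Then the restriction map ω ↦ ω_T is a bijection from {ω ∈ A_m(Γ_h) : sk(ω) = T} onto A(Γ_{h_T}), the set of all acyclic orientations of Γ_{h_T}; furthermore asc(ω) = deg(T) + asc(ω_T) for every acyclic orientation ω of Γ_h with sk(ω) = T. -/
open scoped Classical

/-- `asc(ω)`: the number of edges `{j,i}`, `j < i`, directed from `j` to `i`. -/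
noncomputable def ascOr (n : ℕ) (h : ℕ → ℕ) (ω : ℕ → ℕ → Bool) : ℕ :=
  (((Finset.Icc 1 n) ×ˢ (Finset.Icc 1 n)).filter
    (fun p => IsEdge n h p.1 p.2 ∧ ω p.1 p.2 = true)).card

/-- `m(Γ_h)`: the maximum sink-set size. -/
noncomputable def maxSinkSize (n : ℕ) (h : ℕ → ℕ) : ℕ :=
  sSup {k | ∃ ω, AcyclicOr n h ω ∧ (sinks n h ω).card = k}

/-- `deg(T)`: the number of edges `{ℓ,ℓ'}` of `Γ_h` with `ℓ' ∈ T` and `ℓ < ℓ'`. -/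
noncomputable def degT (n : ℕ) (h : ℕ → ℕ) (T : Finset ℕ) : ℕ :=
  (((Finset.Icc 1 n) ×ˢ (Finset.Icc 1 n)).filter
    (fun p => IsEdge n h p.1 p.2 ∧ p.2 ∈ T)).card

/-- The restricted orientation `ω_T` of `Γ_{h_T}`, transported along `φ_T`. -/
noncomputable def restrictOr (n : ℕ) (T : Finset ℕ) (ω : ℕ → ℕ → Bool) :
    ℕ → ℕ → Bool :=
  fun r s => ω (psiT n T r) (psiT n T s)

/-!
A sink of `ω` receives every edge incident to it, so an orientation whose sink set is `T` is
determined on all edges touching `T`, and it is free only on the subgraph induced by the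
complement of `T`; `φ_T` identifies that subgraph with `Γ_{h_T}`. The ascents of `ω` are then
the edges into `T`, counted by `deg(T)`, together with the ascents of `ω_T`. Conversely an
acyclic orientation of `Γ_{h_T}` extends by directing every edge into `T`: no edge leaves `T`, so
a directed cycle of the extension avoids `T` and `φ_T` carries it to a cycle of `Γ_{h_T}`; the
sinks of the extension contain the independent set `T`, and maximality of `|T|` forces equality.
-/

open Finset

section Sinks

variable {n : ℕ} {h : ℕ → ℕ} {ω : ℕ → ℕ → Bool} {u v : ℕ}

lemma IsSinkAt.eq_true_of_isEdge (hv : IsSinkAt n h ω v) (he : IsEdge n h u v) :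
    ω u v = true := by
  rcases hv u (Or.inl he) with ⟨-, hω⟩ | ⟨he', -⟩
  · exact hω
  · exact absurd he'.2.1 he.2.1.not_gt

lemma IsSinkAt.eq_false_of_isEdge (hu : IsSinkAt n h ω u) (he : IsEdge n h u v) :
    ω u v = false := by
  rcases hu v (Or.inr he) with ⟨he', -⟩ | ⟨-, hω⟩
  · exact absurd he'.2.1 he.2.1.not_gt
  · exact hω

lemma IsSinkAt.not_isEdge (hu : IsSinkAt n h ω u) (hv : IsSinkAt n h ω v) :
    ¬ IsEdge n h u v := fun he => by
  simpa [hv.eq_true_of_isEdge he] using hu.eq_false_of_isEdge he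

lemma isSinkAt_of_mem_sinks (hv : v ∈ sinks n h ω) : IsSinkAt n h ω v :=
  (mem_filter.mp hv).2

lemma IsSinkSet.subset_Icc {T : Finset ℕ} (hT : IsSinkSet n h T) : T ⊆ Icc 1 n := by
  obtain ⟨ω, -, rfl⟩ := hT
  exact filter_subset _ _

lemma IsSinkSet.not_isEdge {T : Finset ℕ} (hT : IsSinkSet n h T) :
    ∀ u ∈ T, ∀ v ∈ T, ¬ IsEdge n h u v := by
  obtain ⟨ω, -, rfl⟩ := hT
  exact fun u hu v hv => (isSinkAt_of_mem_sinks hu).not_isEdge (isSinkAt_of_mem_sinks hv)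

lemma IsEdge.mem_product (he : IsEdge n h u v) : (u, v) ∈ Icc 1 n ×ˢ Icc 1 n := by
  obtain ⟨hu1, huv, hvn, -⟩ := he
  simp only [Finset.mem_product, mem_Icc]
  omega

end Sinks

section Phi

variable {n : ℕ} {T : Finset ℕ} {i x : ℕ}

lemma phiT_eq_card_sdiff (hT : T ⊆ Icc 1 n) (j : ℕ) : phiT T j = #(Icc 1 j \ T) := by
  have hfilter : T.filter (· ≤ j) = T ∩ Icc 1 j := by
    ext t
    simp only [mem_filter, mem_inter, mem_Icc]
    constructor
    · rintro ⟨ht, htj⟩; exact ⟨ht, (mem_Icc.mp (hT ht)).1, htj⟩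
    · rintro ⟨ht, -, htj⟩; exact ⟨ht, htj⟩
  rw [phiT, hfilter, card_sdiff, Nat.card_Icc, Nat.add_sub_cancel]

lemma phiT_mono_s3 (hT : T ⊆ Icc 1 n) : Monotone (phiT T) := fun j k hjk => by
  rw [phiT_eq_card_sdiff hT, phiT_eq_card_sdiff hT]
  exact card_le_card (sdiff_subset_sdiff (Icc_subset_Icc_right hjk) le_rfl)

lemma phiT_lt_phiT (hT : T ⊆ Icc 1 n) (hi : i ∉ T) (hx : x < i) : phiT T x < phiT T i := by
  rw [phiT_eq_card_sdiff hT, phiT_eq_card_sdiff hT]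
  refine card_lt_card ((ssubset_iff_of_subset ?_).mpr ⟨i, ?_, ?_⟩)
  · exact sdiff_subset_sdiff (Icc_subset_Icc_right hx.le) le_rfl
  · exact mem_sdiff.mpr ⟨mem_Icc.mpr ⟨by omega, le_rfl⟩, hi⟩
  · exact fun hmem => hx.not_ge (mem_Icc.mp (mem_sdiff.mp hmem).1).2

lemma le_of_phiT_le_phiT (hT : T ⊆ Icc 1 n) (hi : i ∉ T) (hle : phiT T i ≤ phiT T x) :
    i ≤ x :=
  not_lt.mp fun hx => (phiT_lt_phiT hT hi hx).not_ge hle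

lemma phiT_injOn (hT : T ⊆ Icc 1 n) : Set.InjOn (phiT T) (↑T)ᶜ := fun _ hi _ hj hij =>
  (le_of_phiT_le_phiT hT hi hij.le).antisymm (le_of_phiT_le_phiT hT hj hij.ge)

lemma one_le_phiT (hT : T ⊆ Icc 1 n) (hi1 : 1 ≤ i) (hi : i ∉ T) : 1 ≤ phiT T i :=
  Nat.one_le_of_lt (phiT_lt_phiT hT hi hi1)

lemma phiT_eq_sub_card (hT : T ⊆ Icc 1 n) : phiT T n = n - #T := by
  rw [phiT, filter_true_of_mem fun t ht => (mem_Icc.mp (hT ht)).2]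

lemma phiT_le_sub_card (hT : T ⊆ Icc 1 n) (hin : i ≤ n) : phiT T i ≤ n - #T :=
  phiT_eq_sub_card hT ▸ phiT_mono_s3 hT hin

lemma image_phiT (hT : T ⊆ Icc 1 n) : (Icc 1 n \ T).image (phiT T) = Icc 1 (n - #T) := by
  refine eq_of_subset_of_card_le (fun r hr => ?_) ?_
  · obtain ⟨i, hi, rfl⟩ := mem_image.mp hr
    simp only [mem_sdiff, mem_Icc] at hi
    exact mem_Icc.mpr ⟨one_le_phiT hT hi.1.1 hi.2, phiT_le_sub_card hT hi.1.2⟩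
  · rw [card_image_of_injOn ((phiT_injOn hT).mono fun i hi => (mem_sdiff.mp hi).2),
      ← phiT_eq_card_sdiff hT, phiT_eq_sub_card hT, Nat.card_Icc, Nat.add_sub_cancel]

lemma psiT_spec (hT : T ⊆ Icc 1 n) {r : ℕ} (hr1 : 1 ≤ r) (hr : r ≤ n - #T) :
    1 ≤ psiT n T r ∧ psiT n T r ≤ n ∧ psiT n T r ∉ T ∧ phiT T (psiT n T r) = r := by
  have hmem : r ∈ (Icc 1 n \ T).image (phiT T) := image_phiT hT ▸ mem_Icc.mpr ⟨hr1, hr⟩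
  obtain ⟨i, hi, rfl⟩ := mem_image.mp hmem
  simp only [mem_sdiff, mem_Icc] at hi
  exact Nat.sInf_mem (s := {j | 1 ≤ j ∧ j ≤ n ∧ j ∉ T ∧ phiT T j = phiT T i})
    ⟨i, hi.1.1, hi.1.2, hi.2, rfl⟩

lemma psiT_phiT_s3 (hT : T ⊆ Icc 1 n) (hi1 : 1 ≤ i) (hin : i ≤ n) (hi : i ∉ T) :
    psiT n T (phiT T i) = i := by
  have hmem : psiT n T (phiT T i) ∈ {j | 1 ≤ j ∧ j ≤ n ∧ j ∉ T ∧ phiT T j = phiT T i} :=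
    Nat.sInf_mem ⟨i, hi1, hin, hi, rfl⟩
  exact phiT_injOn hT hmem.2.2.1 hi hmem.2.2.2

end Phi

section Restriction

variable {n : ℕ} {h : ℕ → ℕ} {T : Finset ℕ} {ω : ℕ → ℕ → Bool} {u v r s : ℕ}

lemma IsEdge.map_phiT (hT : T ⊆ Icc 1 n) (he : IsEdge n h u v) (hu : u ∉ T) (hv : v ∉ T) :
    IsEdge (n - #T) (hFunT n h T) (phiT T u) (phiT T v) := by
  obtain ⟨hu1, huv, hvn, hvh⟩ := he
  refine ⟨one_le_phiT hT hu1 hu, phiT_lt_phiT hT hv huv, phiT_le_sub_card hT hvn, ?_⟩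
  rw [hFunT, psiT_phiT_s3 hT hu1 (by omega) hu]
  exact phiT_mono_s3 hT hvh

lemma IsEdge.map_psiT (hT : T ⊆ Icc 1 n) (he : IsEdge (n - #T) (hFunT n h T) r s) :
    IsEdge n h (psiT n T r) (psiT n T s) := by
  obtain ⟨hr1, hrs, hsn, hsh⟩ := he
  obtain ⟨hr1', hrn', hrT, hr⟩ := psiT_spec hT hr1 (by omega)
  obtain ⟨hs1', hsn', hsT, hs⟩ := psiT_spec hT (by omega) hsn
  refine ⟨hr1', ?_, hsn', ?_⟩
  · exact not_le.mp fun hle => hrs.not_ge (hr ▸ hs ▸ phiT_mono_s3 hT hle)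
  · rw [hFunT, ← hs] at hsh
    exact le_of_phiT_le_phiT hT hsT hsh

lemma IsEdge.restrictOr_phiT (hT : T ⊆ Icc 1 n) (he : IsEdge n h u v) (hu : u ∉ T)
    (hv : v ∉ T) : restrictOr n T ω (phiT T u) (phiT T v) = ω u v := by
  obtain ⟨hu1, huv, hvn, -⟩ := he
  rw [restrictOr, psiT_phiT_s3 hT hu1 (by omega) hu, psiT_phiT_s3 hT (by omega) hvn hv]

lemma Dir.map_psiT (hT : T ⊆ Icc 1 n) (hd : Dir (n - #T) (hFunT n h T) (restrictOr n T ω) r s) :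
    Dir n h ω (psiT n T r) (psiT n T s) := by
  rcases hd with ⟨he, hω⟩ | ⟨he, hω⟩
  · exact Or.inl ⟨he.map_psiT hT, hω⟩
  · exact Or.inr ⟨he.map_psiT hT, hω⟩

lemma AcyclicOr.restrictOr (hT : T ⊆ Icc 1 n) (hω : AcyclicOr n h ω) :
    AcyclicOr (n - #T) (hFunT n h T) (restrictOr n T ω) := fun r hcyc =>
  hω _ (Relation.TransGen.lift (psiT n T) (fun _ _ => Dir.map_psiT hT) r r hcyc)

lemma eq_of_restrictOr_eq {ω₁ ω₂ : ℕ → ℕ → Bool} (hT : T ⊆ Icc 1 n)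
    (hω₁ : ∀ t ∈ T, IsSinkAt n h ω₁ t) (hω₂ : ∀ t ∈ T, IsSinkAt n h ω₂ t)
    (hres : ∀ r s, IsEdge (n - #T) (hFunT n h T) r s →
      restrictOr n T ω₁ r s = restrictOr n T ω₂ r s)
    (he : IsEdge n h u v) : ω₁ u v = ω₂ u v := by
  by_cases hv : v ∈ T
  · rw [(hω₁ v hv).eq_true_of_isEdge he, (hω₂ v hv).eq_true_of_isEdge he]
  by_cases hu : u ∈ T
  · rw [(hω₁ u hu).eq_false_of_isEdge he, (hω₂ u hu).eq_false_of_isEdge he]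
  rw [← he.restrictOr_phiT (ω := ω₁) hT hu hv, ← he.restrictOr_phiT (ω := ω₂) hT hu hv]
  exact hres _ _ (he.map_phiT hT hu hv)

end Restriction

section Ascents

variable {n : ℕ} {h : ℕ → ℕ} {T : Finset ℕ} {ω : ℕ → ℕ → Bool}

lemma card_ascents_into_eq_degT (hsink : ∀ t ∈ T, IsSinkAt n h ω t) :
    #({p ∈ Icc 1 n ×ˢ Icc 1 n | IsEdge n h p.1 p.2 ∧ ω p.1 p.2 = true} |>.filter
      (·.2 ∈ T)) = degT n h T := by
  rw [degT, filter_filter]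
  congr 1
  refine filter_congr fun p _ => ⟨fun ⟨⟨he, _⟩, hp⟩ => ⟨he, hp⟩,
    fun ⟨he, hp⟩ => ⟨⟨he, (hsink _ hp).eq_true_of_isEdge he⟩, hp⟩⟩

lemma card_ascents_outside_eq_ascOr (hT : T ⊆ Icc 1 n) (hsink : ∀ t ∈ T, IsSinkAt n h ω t) :
    #({p ∈ Icc 1 n ×ˢ Icc 1 n | IsEdge n h p.1 p.2 ∧ ω p.1 p.2 = true} |>.filter
      (·.2 ∉ T)) = ascOr (n - #T) (hFunT n h T) (restrictOr n T ω) := by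
  have hsrc : ∀ u v, IsEdge n h u v → ω u v = true → u ∉ T := fun u v he hω hu => by
    simp [(hsink u hu).eq_false_of_isEdge he] at hω
  rw [ascOr, filter_filter]
  refine card_nbij' (fun p => (phiT T p.1, phiT T p.2)) (fun q => (psiT n T q.1, psiT n T q.2))
    ?_ ?_ ?_ ?_
  · rintro ⟨u, v⟩ hp
    simp only [mem_coe, mem_filter] at hp ⊢
    obtain ⟨-, ⟨he, hω⟩, hv⟩ := hp
    have hu := hsrc u v he hω
    have he' := he.map_phiT hT hu hv
    exact ⟨he'.mem_product, he', he.restrictOr_phiT hT hu hv ▸ hω⟩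
  · rintro ⟨r, s⟩ hq
    simp only [mem_coe, mem_filter] at hq ⊢
    obtain ⟨-, he, hω⟩ := hq
    have he' := he.map_psiT hT
    obtain ⟨hr1, hrs, hsn, -⟩ := he
    exact ⟨he'.mem_product, ⟨he', hω⟩, (psiT_spec hT (by omega) hsn).2.2.1⟩
  · rintro ⟨u, v⟩ hp
    simp only [mem_coe, mem_filter] at hp
    obtain ⟨-, ⟨he, hω⟩, hv⟩ := hp
    obtain ⟨hu1, huv, hvn, -⟩ := id he
    simp only [psiT_phiT_s3 hT hu1 (by omega) (hsrc u v he hω), psiT_phiT_s3 hT (by omega) hvn hv]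
  · rintro ⟨r, s⟩ hq
    simp only [mem_coe, mem_filter] at hq
    obtain ⟨-, ⟨hr1, hrs, hsn, -⟩, -⟩ := hq
    simp only [(psiT_spec hT hr1 (by omega)).2.2.2, (psiT_spec hT (by omega) hsn).2.2.2]

lemma ascOr_eq_degT_add (hT : T ⊆ Icc 1 n) (hsink : ∀ t ∈ T, IsSinkAt n h ω t) :
    ascOr n h ω = degT n h T + ascOr (n - #T) (hFunT n h T) (restrictOr n T ω) := by
  rw [← card_ascents_into_eq_degT hsink, ← card_ascents_outside_eq_ascOr hT hsink,
    card_filter_add_card_filter_not, ascOr]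

end Ascents

section Extension

variable {n : ℕ} {h : ℕ → ℕ} {T : Finset ℕ} {ω' : ℕ → ℕ → Bool} {a b : ℕ}

def extendOr (T : Finset ℕ) (ω' : ℕ → ℕ → Bool) : ℕ → ℕ → Bool :=
  fun u v => if v ∈ T then true else if u ∈ T then false else ω' (phiT T u) (phiT T v)

lemma isSinkAt_extendOr (hind : ∀ u ∈ T, ∀ v ∈ T, ¬ IsEdge n h u v) {v : ℕ} (hv : v ∈ T) :
    IsSinkAt n h (extendOr T ω') v := by
  rintro u (he | he)
  · exact Or.inl ⟨he, by simp [extendOr, hv]⟩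
  · have hu : u ∉ T := fun hu => hind v hv u hu he
    exact Or.inr ⟨he, by simp [extendOr, hu, hv]⟩

lemma Dir.notMem_of_extendOr (hind : ∀ u ∈ T, ∀ v ∈ T, ¬ IsEdge n h u v)
    (hd : Dir n h (extendOr T ω') a b) : a ∉ T := by
  intro ha
  rcases hd with ⟨he, hω⟩ | ⟨-, hω⟩
  · have hb : b ∉ T := fun hb => hind a ha b hb he
    simp [extendOr, ha, hb] at hω
  · simp [extendOr, ha] at hω

lemma Dir.map_phiT_of_extendOr (hT : T ⊆ Icc 1 n) (hind : ∀ u ∈ T, ∀ v ∈ T, ¬ IsEdge n h u v)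
    (hd : Dir n h (extendOr T ω') a b) (hb : b ∉ T) :
    Dir (n - #T) (hFunT n h T) ω' (phiT T a) (phiT T b) := by
  have ha := hd.notMem_of_extendOr hind
  rcases hd with ⟨he, hω⟩ | ⟨he, hω⟩
  · exact Or.inl ⟨he.map_phiT hT ha hb, by simpa [extendOr, ha, hb] using hω⟩
  · exact Or.inr ⟨he.map_phiT hT hb ha, by simpa [extendOr, ha, hb] using hω⟩

lemma acyclicOr_extendOr (hT : T ⊆ Icc 1 n) (hind : ∀ u ∈ T, ∀ v ∈ T, ¬ IsEdge n h u v)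
    (hω' : AcyclicOr (n - #T) (hFunT n h T) ω') : AcyclicOr n h (extendOr T ω') := by
  have hpath : ∀ a b, Relation.TransGen (Dir n h (extendOr T ω')) a b → b ∉ T →
      Relation.TransGen (Dir (n - #T) (hFunT n h T) ω') (phiT T a) (phiT T b) := by
    intro a b hab
    induction hab with
    | single hd => exact fun hb => .single (hd.map_phiT_of_extendOr hT hind hb)
    | tail _ hd ih =>
      exact fun hc => (ih (hd.notMem_of_extendOr hind)).tail (hd.map_phiT_of_extendOr hT hind hc)
  intro v hcyc
  obtain ⟨_, hd, -⟩ := Relation.TransGen.head'_iff.mp hcyc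
  exact hω' _ (hpath v v hcyc (hd.notMem_of_extendOr hind))

lemma restrictOr_extendOr (hT : T ⊆ Icc 1 n) {r s : ℕ}
    (he : IsEdge (n - #T) (hFunT n h T) r s) : restrictOr n T (extendOr T ω') r s = ω' r s := by
  obtain ⟨hr1, hrs, hsn, -⟩ := he
  obtain ⟨-, -, hrT, hr⟩ := psiT_spec hT hr1 (by omega)
  obtain ⟨-, -, hsT, hs⟩ := psiT_spec hT (by omega) hsn
  simp [restrictOr, extendOr, hrT, hsT, hr, hs]

end Extension

lemma card_sinks_le_maxSinkSize {n : ℕ} {h : ℕ → ℕ} {ω : ℕ → ℕ → Bool}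
    (hω : AcyclicOr n h ω) : #(sinks n h ω) ≤ maxSinkSize n h := by
  refine le_csSup ⟨n, ?_⟩ ⟨ω, hω, rfl⟩
  rintro k ⟨ω, -, rfl⟩
  exact (card_le_card (filter_subset _ _)).trans (by simp)

lemma sinks_eq_of_subset_of_card_eq_maxSinkSize {n : ℕ} {h : ℕ → ℕ} {ω : ℕ → ℕ → Bool}
    {T : Finset ℕ} (hω : AcyclicOr n h ω) (hT : T ⊆ sinks n h ω)
    (hcard : #T = maxSinkSize n h) : sinks n h ω = T :=
  (eq_of_subset_of_card_le hT (hcard ▸ card_sinks_le_maxSinkSize hω)).symm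

theorem stmt3_general (n m : ℕ) (h : ℕ → ℕ)
    (hm : m = maxSinkSize n h)
    (T : Finset ℕ) (hT : IsSinkSet n h T) (hcard : T.card = m) :
    (∀ ω, AcyclicOr n h ω → sinks n h ω = T →
      AcyclicOr (n - m) (hFunT n h T) (restrictOr n T ω) ∧
      ascOr n h ω = degT n h T + ascOr (n - m) (hFunT n h T) (restrictOr n T ω)) ∧
    (∀ ω₁ ω₂, AcyclicOr n h ω₁ → sinks n h ω₁ = T →
      AcyclicOr n h ω₂ → sinks n h ω₂ = T →
      (∀ r s, IsEdge (n - m) (hFunT n h T) r s →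
        restrictOr n T ω₁ r s = restrictOr n T ω₂ r s) →
      (∀ u v, IsEdge n h u v → ω₁ u v = ω₂ u v)) ∧
    (∀ ω', AcyclicOr (n - m) (hFunT n h T) ω' →
      ∃ ω, AcyclicOr n h ω ∧ sinks n h ω = T ∧
        ∀ r s, IsEdge (n - m) (hFunT n h T) r s →
          restrictOr n T ω r s = ω' r s) := by
  subst hcard
  have hTsub := hT.subset_Icc
  have hsink : ∀ ω, sinks n h ω = T → ∀ t ∈ T, IsSinkAt n h ω t :=
    fun ω hω t ht => isSinkAt_of_mem_sinks (hω ▸ ht)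
  refine ⟨fun ω hω hωT => ⟨hω.restrictOr hTsub, ascOr_eq_degT_add hTsub (hsink ω hωT)⟩,
    fun ω₁ ω₂ _ hω₁ _ hω₂ hres _ _ he =>
      eq_of_restrictOr_eq hTsub (hsink ω₁ hω₁) (hsink ω₂ hω₂) hres he,
    fun ω' hω' => ?_⟩
  have hext := acyclicOr_extendOr hTsub hT.not_isEdge hω'
  refine ⟨extendOr T ω', hext, sinks_eq_of_subset_of_card_eq_maxSinkSize hext ?_ hm,
    fun r s he => restrictOr_extendOr hTsub he⟩
  exact fun t ht => mem_filter.mpr ⟨hTsub ht, isSinkAt_extendOr hT.not_isEdge ht⟩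

theorem stmt3 (n m : ℕ) (h : ℕ → ℕ) (hn : 1 ≤ n) (hh : IsHessenberg n h)
    (hm : m = maxSinkSize n h)
    (T : Finset ℕ) (hT : IsSinkSet n h T) (hcard : T.card = m) :
    (∀ ω, AcyclicOr n h ω → sinks n h ω = T →
      AcyclicOr (n - m) (hFunT n h T) (restrictOr n T ω) ∧
      ascOr n h ω = degT n h T + ascOr (n - m) (hFunT n h T) (restrictOr n T ω)) ∧
    (∀ ω₁ ω₂, AcyclicOr n h ω₁ → sinks n h ω₁ = T →
      AcyclicOr n h ω₂ → sinks n h ω₂ = T →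
      (∀ r s, IsEdge (n - m) (hFunT n h T) r s →
        restrictOr n T ω₁ r s = restrictOr n T ω₂ r s) →
      (∀ u v, IsEdge n h u v → ω₁ u v = ω₂ u v)) ∧
    (∀ ω', AcyclicOr (n - m) (hFunT n h T) ω' →
      ∃ ω, AcyclicOr n h ω ∧ sinks n h ω = T ∧
        ∀ r s, IsEdge (n - m) (hFunT n h T) r s →
          restrictOr n T ω r s = ω' r s) :=
  stmt3_general n m h hm T hT hcard
end

section
/- Let h be a Hessenberg function on {1,…,n}. Then the ideal I_h is abelian if and only if i ≤ h(1) for every i ∈ {1,…,n} with h(i) < n; that is, I_h is abelian if and only if h(1) is at least the largest index i with h(i) < n (the index of h), the condition being vacuous when h(i) = n for all i. -/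
/-- The ideal `I_h ⊆ Φ⁻`: pairs `(i,j)` with `1 ≤ j < i ≤ n` and `i > h(j)`. -/
def Ih (n : ℕ) (h : ℕ → ℕ) : Set (ℕ × ℕ) :=
  {p | 1 ≤ p.2 ∧ p.2 < p.1 ∧ p.1 ≤ n ∧ h p.2 < p.1}

/-- `I_h` is abelian: there are no `i > j > k` with `(i,j) ∈ I_h` and `(j,k) ∈ I_h`. -/
def IhAbelian (n : ℕ) (h : ℕ → ℕ) : Prop :=
  ¬ ∃ i j k, (i, j) ∈ Ih n h ∧ (j, k) ∈ Ih n h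

lemma hess_mono (n : ℕ) (h : ℕ → ℕ) (hh : IsHessenberg n h) :
    ∀ a b, 1 ≤ a → a ≤ b → b ≤ n → h a ≤ h b := by
  intro a b ha hab hbn
  induction b with
  | zero => omega
  | succ m ih =>
    rcases Nat.eq_or_lt_of_le hab with rfl | hlt
    · exact le_refl _
    · have hm : h a ≤ h m := ih (by omega) (by omega)
      exact hm.trans (hh.2 m (by omega) (by omega))

theorem stmt4 (n : ℕ) (h : ℕ → ℕ) (hn : 1 ≤ n) (hh : IsHessenberg n h) :
    IhAbelian n h ↔ ∀ i, 1 ≤ i → i ≤ n → h i < n → i ≤ h 1 := by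
  constructor
  · intro hab i hi1 hin hhi
    by_contra hcon
    push_neg at hcon
    have h1 : 1 ≤ h 1 := (hh.1 1 le_rfl hn).1
    have hi2 : 2 ≤ i := by omega
    have hilt : i < n := by
      have := (hh.1 i hi1 hin).1
      omega
    exact hab ⟨n, i, 1, ⟨hi1, hilt, le_rfl, hhi⟩, ⟨le_rfl, by omega, by omega, hcon⟩⟩
  · rintro hcond ⟨i, j, k, ⟨hj1, hji, hin, hhj⟩, ⟨hk1, hkj, hjn, hhk⟩⟩
    simp only at hhj hhk
    have hjln : h j < n := by omega
    have hle : j ≤ h 1 := hcond j hj1 (by omega) hjln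
    have : h 1 ≤ h k := hess_mono n h hh 1 k le_rfl hk1 (by omega)
    omega
end

section
/- Let I ⊆ Φ⁻ be a nonempty ideal. Then ht(I) equals the maximum k ≥ 1 for which there exist q₁ < q₂ < ⋯ < q_{k+1} in {1,…,n} with (q_{i+1}, q_i) ∈ I for all 1 ≤ i ≤ k; that is, ht(I) is the maximum cardinality of a subset of height k of Φ⁻ contained in I, over all k. -/
/-- `p` is a negative root of `gl(n)`, encoded as `(i,j)` with `1 ≤ j < i ≤ n`. -/
def IsNegRoot (n : ℕ) (p : ℕ × ℕ) : Prop := 1 ≤ p.2 ∧ p.2 < p.1 ∧ p.1 ≤ n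

/-- `I` is an ideal in `Φ⁻`. -/
def IsIdeal (n : ℕ) (I : Set (ℕ × ℕ)) : Prop :=
  (∀ p ∈ I, IsNegRoot n p) ∧
  (∀ i j, (i, j) ∈ I → ∀ k, i < k → k ≤ n → (k, j) ∈ I) ∧
  (∀ i j, (i, j) ∈ I → ∀ l, 1 ≤ l → l < j → (i, l) ∈ I)

/-- The lower central series of `I`: `I₁ = I`, and
`I_m = {(i,k) : ∃ j, i > j > k, ((i,j) ∈ I ∧ (j,k) ∈ I_{m−1}) ∨ ((i,j) ∈ I_{m−1} ∧ (j,k) ∈ I)}`. -/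
def lcs (I : Set (ℕ × ℕ)) : ℕ → Set (ℕ × ℕ)
  | 0 => ∅
  | 1 => I
  | m + 2 =>
      {p | ∃ j, p.2 < j ∧ j < p.1 ∧
        (((p.1, j) ∈ I ∧ (j, p.2) ∈ lcs I (m + 1)) ∨
          ((p.1, j) ∈ lcs I (m + 1) ∧ (j, p.2) ∈ I))}

/-- The height of an ideal: the largest `m ≥ 1` with `I_m ≠ ∅` (and `0` if `I = ∅`). -/
noncomputable def heightIdeal (I : Set (ℕ × ℕ)) : ℕ :=
  sSup {m | 1 ≤ m ∧ lcs I m ≠ ∅}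

/-!
`I_{m+1}` consists exactly of the roots `(q_{m+1}, q_0)` spanned by chains
`q_0 < q_1 < ⋯ < q_{m+1}` all of whose steps `(q_{i+1}, q_i)` lie in `I`: a chain splits at its
last (or first) step, matching the two alternatives in the recursion for the lower central
series. A subset of height `k` in `I` is such a chain, so `I_k ≠ ∅` exactly when `I` contains
one, and chains inside `{1,…,n}` have length `< n`, which bounds the height.
-/

def IsChainIn (I : Set (ℕ × ℕ)) (k : ℕ) (q : ℕ → ℕ) : Prop :=
  ∀ i < k, (q (i + 1), q i) ∈ I

lemma add_le_of_lt_succ {k : ℕ} {q : ℕ → ℕ} (h : ∀ i < k, q i < q (i + 1)) :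
    q 0 + k ≤ q k := by
  induction k with
  | zero => simp
  | succ k ih =>
    have := ih fun i hi => h i (by omega)
    have := h k (by omega)
    omega

namespace IsChainIn

variable {I : Set (ℕ × ℕ)} {k : ℕ} {q : ℕ → ℕ}

lemma lt_succ (hneg : ∀ p ∈ I, p.2 < p.1) (h : IsChainIn I k q) :
    ∀ i < k, q i < q (i + 1) :=
  fun i hi => hneg _ (h i hi)

lemma exists_snoc (h : IsChainIn I k q) {b : ℕ} (hb : (b, q k) ∈ I) :
    ∃ q', IsChainIn I (k + 1) q' ∧ q' 0 = q 0 ∧ q' (k + 1) = b := by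
  refine ⟨Function.update q (k + 1) b, fun i hi => ?_, by simp, by simp⟩
  rcases Nat.lt_succ_iff_lt_or_eq.mp hi with hi | rfl
  · simpa [Function.update_of_ne (show i + 1 ≠ k + 1 by omega),
      Function.update_of_ne (show i ≠ k + 1 by omega)] using h i hi
  · simpa using hb

lemma exists_cons (h : IsChainIn I k q) {a : ℕ} (ha : (q 0, a) ∈ I) :
    ∃ q', IsChainIn I (k + 1) q' ∧ q' 0 = a ∧ q' (k + 1) = q k := by
  refine ⟨fun | 0 => a | i + 1 => q i, fun i hi => ?_, rfl, rfl⟩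
  cases i with
  | zero => exact ha
  | succ i => exact h i (by omega)

end IsChainIn

lemma mem_lcs_succ_iff {I : Set (ℕ × ℕ)} (hneg : ∀ p ∈ I, p.2 < p.1) (m : ℕ) {a b : ℕ} :
    (b, a) ∈ lcs I (m + 1) ↔ ∃ q, IsChainIn I (m + 1) q ∧ q 0 = a ∧ q (m + 1) = b := by
  induction m generalizing a b with
  | zero =>
    constructor
    · intro hab
      exact IsChainIn.exists_cons (q := fun _ => b) (k := 0) (fun i hi => by omega) hab
    · rintro ⟨q, hq, rfl, rfl⟩
      exact hq 0 zero_lt_one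
  | succ m ih =>
    show (∃ j, a < j ∧ j < b ∧ ((b, j) ∈ I ∧ (j, a) ∈ lcs I (m + 1) ∨
      (b, j) ∈ lcs I (m + 1) ∧ (j, a) ∈ I)) ↔ _
    constructor
    · rintro ⟨j, -, -, ⟨hbj, hja⟩ | ⟨hbj, hja⟩⟩
      · obtain ⟨q, hq, rfl, rfl⟩ := ih.1 hja
        exact hq.exists_snoc hbj
      · obtain ⟨q, hq, rfl, rfl⟩ := ih.1 hbj
        exact hq.exists_cons hja
    · rintro ⟨q, hq, rfl, rfl⟩
      have hsteps := hq.lt_succ hneg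
      refine ⟨q (m + 1), ?_, hsteps (m + 1) (by omega), Or.inl ⟨hq (m + 1) (by omega), ?_⟩⟩
      · have := add_le_of_lt_succ (k := m + 1) fun i hi => hsteps i (by omega)
        omega
      · exact ih.2 ⟨q, fun i hi => hq i (by omega), rfl, rfl⟩

lemma lcs_ne_empty_iff {n : ℕ} {I : Set (ℕ × ℕ)} (hI : ∀ p ∈ I, IsNegRoot n p) {k : ℕ}
    (hk : 1 ≤ k) :
    lcs I k ≠ ∅ ↔ ∃ q : ℕ → ℕ, (∀ i ≤ k, 1 ≤ q i ∧ q i ≤ n) ∧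
      (∀ i < k, q i < q (i + 1)) ∧ IsChainIn I k q := by
  have hneg : ∀ p ∈ I, p.2 < p.1 := fun p hp => (hI p hp).2.1
  obtain ⟨m, rfl⟩ : ∃ m, k = m + 1 := ⟨k - 1, by omega⟩
  rw [← Set.nonempty_iff_ne_empty]
  constructor
  · rintro ⟨⟨b, a⟩, hab⟩
    obtain ⟨q, hq, -, -⟩ := (mem_lcs_succ_iff hneg m).1 hab
    have hroot : ∀ i ≤ m, 1 ≤ q i ∧ q i < q (i + 1) ∧ q (i + 1) ≤ n :=
      fun i hi => hI _ (hq i (by omega))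
    refine ⟨q, fun i hi => ?_, hq.lt_succ hneg, hq⟩
    rcases Nat.lt_or_eq_of_le hi with hi | rfl
    · have := hroot i (by omega); omega
    · have := hroot m le_rfl; omega
  · rintro ⟨q, -, -, hq⟩
    exact ⟨_, (mem_lcs_succ_iff hneg m).2 ⟨q, hq, rfl, rfl⟩⟩

theorem stmt5_general (n : ℕ) (I : Set (ℕ × ℕ)) (hI : IsIdeal n I)
    (hne : I.Nonempty) :
    IsGreatest
      {k | 1 ≤ k ∧ ∃ q : ℕ → ℕ, (∀ i ≤ k, 1 ≤ q i ∧ q i ≤ n) ∧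
        (∀ i < k, q i < q (i + 1)) ∧ (∀ i < k, (q (i + 1), q i) ∈ I)}
      (heightIdeal I) := by
  set T := {k | 1 ≤ k ∧ ∃ q : ℕ → ℕ, (∀ i ≤ k, 1 ≤ q i ∧ q i ≤ n) ∧
    (∀ i < k, q i < q (i + 1)) ∧ (∀ i < k, (q (i + 1), q i) ∈ I)}
  have hT : {m | 1 ≤ m ∧ lcs I m ≠ ∅} = T := by
    ext k
    exact and_congr_right (lcs_ne_empty_iff hI.1)
  have hbdd : BddAbove T := by
    refine ⟨n, fun k ⟨_, q, hbounds, hsteps, _⟩ => ?_⟩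
    have := add_le_of_lt_succ hsteps
    have := hbounds 0 (Nat.zero_le k)
    have := hbounds k le_rfl
    omega
  have hTne : T.Nonempty := hT ▸ ⟨1, le_rfl, hne.ne_empty⟩
  rw [heightIdeal, hT]
  exact ⟨Nat.sSup_mem hTne hbdd, fun k hk => le_csSup hbdd hk⟩

theorem stmt5 (n : ℕ) (hn : 1 ≤ n) (I : Set (ℕ × ℕ)) (hI : IsIdeal n I)
    (hne : I.Nonempty) :
    IsGreatest
      {k | 1 ≤ k ∧ ∃ q : ℕ → ℕ, (∀ i ≤ k, 1 ≤ q i ∧ q i ≤ n) ∧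
        (∀ i < k, q i < q (i + 1)) ∧ (∀ i < k, (q (i + 1), q i) ∈ I)}
      (heightIdeal I) :=
  stmt5_general n I hI hne
end

section
/- Let n ≥ 2, let h be a Hessenberg function on {1,…,n} with I_h abelian, let (a,b) ∈ I_h (so a > b), let 1 ≤ ν₁ ≤ n−1, and let w₀ be the permutation defined from (a,b) and ν₁. Then: (1) every inversion (i,j) ∈ inv(w₀) satisfies {i,j} ∩ {a,b} ≠ ∅; and (2) w₀ ∈ D_ν(a,b), i.e., w₀(a) = ν₁, w₀(b) = ν₁+1, and for every s ∈ {1,…,n−1} with s ≠ ν₁, if w₀⁻¹(s) > w₀⁻¹(s+1) then w₀⁻¹(s) ≤ h(w₀⁻¹(s+1)). -/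
/-- `w` is a permutation of `{1,…,n}` (fixing everything else). -/
def PermOn (n : ℕ) (w : Equiv.Perm ℕ) : Prop :=
  ∀ i, i ∉ Set.Icc 1 n → w i = i

/-- The condition `w⁻¹(J_ν) ⊆ Φ_h`. -/
def JCond (n : ℕ) (h : ℕ → ℕ) (ν₁ : ℕ) (w : Equiv.Perm ℕ) : Prop :=
  ∀ s, 1 ≤ s → s < n → s ≠ ν₁ →
    w.symm (s + 1) < w.symm s → w.symm s ≤ h (w.symm (s + 1))

/-- The condition `w⁻¹(α_{ν₁}) ∈ I_h`. -/
def ICond (n : ℕ) (h : ℕ → ℕ) (ν₁ : ℕ) (w : Equiv.Perm ℕ) : Prop :=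
  w.symm (ν₁ + 1) < w.symm ν₁ ∧ h (w.symm (ν₁ + 1)) < w.symm ν₁

/-- `w ∈ D_ν`. -/
def memD (n : ℕ) (h : ℕ → ℕ) (ν₁ : ℕ) (w : Equiv.Perm ℕ) : Prop :=
  PermOn n w ∧ JCond n h ν₁ w ∧ ICond n h ν₁ w

/-- `w ∈ D_ν(a,b)`. -/
def memDab (n : ℕ) (h : ℕ → ℕ) (ν₁ a b : ℕ) (w : Equiv.Perm ℕ) : Prop :=
  memD n h ν₁ w ∧ w a = ν₁ ∧ w b = ν₁ + 1

/-- `w₀` is the permutation of `{1,…,n}` with `w₀(a) = ν₁`, `w₀(b) = ν₁+1`, whose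
restriction to `{1,…,n}∖{a,b}` is strictly increasing (onto `{1,…,n}∖{ν₁,ν₁+1}`). -/
def IsW0 (n ν₁ a b : ℕ) (w₀ : Equiv.Perm ℕ) : Prop :=
  PermOn n w₀ ∧ w₀ a = ν₁ ∧ w₀ b = ν₁ + 1 ∧
  ∀ i j, i ∈ Set.Icc 1 n → j ∈ Set.Icc 1 n →
    i ≠ a → i ≠ b → j ≠ a → j ≠ b → i < j → w₀ i < w₀ j

theorem stmt10 (n : ℕ) (h : ℕ → ℕ) (hn : 2 ≤ n) (hh : IsHessenberg n h)
    (habel : IhAbelian n h) (a b : ℕ) (hIb : (a, b) ∈ Ih n h)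
    (ν₁ : ℕ) (hν : 1 ≤ ν₁) (hν' : ν₁ ≤ n - 1)
    (w₀ : Equiv.Perm ℕ) (hw₀ : IsW0 n ν₁ a b w₀) :
    (∀ i j, j < i → w₀ i < w₀ j → (i = a ∨ i = b ∨ j = a ∨ j = b)) ∧
    memDab n h ν₁ a b w₀ := by
  obtain ⟨hP, hwa, hwb, hmono⟩ := hw₀
  have hIb' : 1 ≤ b ∧ b < a ∧ a ≤ n ∧ h b < a := hIb
  obtain ⟨hb1, hba, han, hhb⟩ := hIb'
  -- w₀ maps [1,n] into [1,n]
  have hmaps : ∀ i, i ∈ Set.Icc 1 n → w₀ i ∈ Set.Icc 1 n := by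
    intro i hi
    by_contra hc
    have h1 : w₀ (w₀ i) = w₀ i := hP (w₀ i) hc
    have h2 : w₀ i = i := w₀.injective h1
    rw [h2] at hc
    exact hc hi
  have part1 : ∀ i j, j < i → w₀ i < w₀ j → (i = a ∨ i = b ∨ j = a ∨ j = b) := by
    intro i j hji hw
    by_contra hc
    push_neg at hc
    obtain ⟨hia, hib, hja, hjb⟩ := hc
    by_cases hi : i ∈ Set.Icc 1 n
    · by_cases hj : j ∈ Set.Icc 1 n
      · exact absurd (hmono j i hj hi hja hjb hia hib hji) (by omega)
      · -- j ∉ [1,n], j < i ≤ n, so j = 0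
        have hj0 : j = 0 := by
          simp only [Set.mem_Icc, not_and_or, not_le] at hi hj ⊢
          rcases hj with h' | h' <;> omega
        have : w₀ j = j := hP j hj
        have := (hmaps i hi).1
        omega
    · by_cases hj : j ∈ Set.Icc 1 n
      · have hin : n < i := by
          simp only [Set.mem_Icc, not_and_or, not_le] at hi hj
          omega
        have h1 : w₀ i = i := hP i hi
        have := (hmaps j hj).2
        omega
      · have h1 : w₀ i = i := hP i hi
        have h2 : w₀ j = j := hP j hj
        omega
  have hsyma : w₀.symm ν₁ = a := by rw [← hwa, Equiv.symm_apply_apply]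
  have hsymb : w₀.symm (ν₁ + 1) = b := by rw [← hwb, Equiv.symm_apply_apply]
  refine ⟨part1, ⟨hP, ?_, ?_⟩, hwa, hwb⟩
  · -- JCond
    intro s hs1 hsn hsν hdesc
    set p := w₀.symm s with hp
    set q := w₀.symm (s + 1) with hq
    have hwp : w₀ p = s := w₀.apply_symm_apply s
    have hwq : w₀ q = s + 1 := w₀.apply_symm_apply (s + 1)
    have hpmem : p ∈ Set.Icc 1 n := by
      by_contra hc
      have := hP p hc
      rw [this] at hwp
      rw [hwp] at hc
      exact hc ⟨hs1, by omega⟩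
    have hqmem : q ∈ Set.Icc 1 n := by
      by_contra hc
      have := hP q hc
      rw [this] at hwq
      rw [hwq] at hc
      exact hc ⟨by omega, by omega⟩
    rcases part1 p q hdesc (by omega) with h1 | h1 | h1 | h1
    · exact absurd (by rw [h1, hwa] at hwp; omega : s = ν₁) hsν
    · -- p = b, so s = ν₁ + 1
      have hsb : s = ν₁ + 1 := by rw [h1, hwb] at hwp; omega
      by_contra hcon
      push_neg at hcon
      refine habel ⟨a, b, q, ⟨hb1, hba, han, hhb⟩, ?_⟩
      show 1 ≤ q ∧ q < b ∧ b ≤ n ∧ h q < b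
      exact ⟨hqmem.1, by omega, by omega, by omega⟩
    · -- q = a, so s + 1 = ν₁
      by_contra hcon
      push_neg at hcon
      refine habel ⟨p, a, b, ?_, ⟨hb1, hba, han, hhb⟩⟩
      show 1 ≤ a ∧ a < p ∧ p ≤ n ∧ h a < p
      exact ⟨by omega, by rw [← h1]; omega, hpmem.2, by rw [← h1]; omega⟩
    · exact absurd (by rw [h1, hwb] at hwq; omega : s = ν₁) hsν
  · -- ICond
    exact ⟨by rw [hsyma, hsymb]; exact hba, by rw [hsyma, hsymb]; exact hhb⟩
end

section
/- Let n ≥ 3, let h be a Hessenberg function on {1,…,n} with I_h abelian, let μ = (μ₁, μ₂) with μ₁ ≥ μ₂ ≥ 0 and μ₁ + μ₂ = n−2, and set ν₁ = μ₁ + 1. Let (a,b) ∈ I_h and T = {a,b}. Then the number of permutations w of {1,…,n} belonging to D_ν(a,b) equals the number of permutations x of {1,…,n−2} satisfying x⁻¹(J_μ) ⊆ Φ_{h_T}. -/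
/-- `φ_T(j) = j − #{t ∈ {a,b} : t ≤ j}` for `T = {a,b}`. -/
def phiPair (a b j : ℕ) : ℕ :=
  j - ((if a ≤ j then 1 else 0) + (if b ≤ j then 1 else 0))

/-- The inverse of `φ_T` on `{1,…,n}∖{a,b}`. -/
noncomputable def psiPair (n a b r : ℕ) : ℕ :=
  sInf {i | 1 ≤ i ∧ i ≤ n ∧ i ≠ a ∧ i ≠ b ∧ phiPair a b i = r}

/-- The Hessenberg function `h_T` on `{1,…,n−2}` for `T = {a,b}`, defined by
`h_T(φ_T(i)) = φ_T(h(i))` for `i ∉ {a,b}`. -/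
noncomputable def hPair (n : ℕ) (h : ℕ → ℕ) (a b r : ℕ) : ℕ :=
  phiPair a b (h (psiPair n a b r))

/- ================= auxiliary material ================= -/

lemma phi_le_iff (a b p m : ℕ) (hb : 1 ≤ b) (hba : b < a)
    (hpa : p ≠ a) (hpb : p ≠ b) :
    phiPair a b p ≤ phiPair a b m ↔ p ≤ m := by
  unfold phiPair; split_ifs <;> omega

lemma phi_lt_iff (a b p q : ℕ) (hb : 1 ≤ b) (hba : b < a)
    (hpa : p ≠ a) (hpb : p ≠ b) (hqa : q ≠ a) (hqb : q ≠ b) :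
    phiPair a b p < phiPair a b q ↔ p < q := by
  unfold phiPair; split_ifs <;> omega

lemma psi_phi (n a b j : ℕ) (hb : 1 ≤ b) (hba : b < a) (han : a ≤ n)
    (hj1 : 1 ≤ j) (hjn : j ≤ n) (hja : j ≠ a) (hjb : j ≠ b) :
    psiPair n a b (phiPair a b j) = j := by
  have hset : {i | 1 ≤ i ∧ i ≤ n ∧ i ≠ a ∧ i ≠ b ∧ phiPair a b i = phiPair a b j}
      = {j} := by
    ext i
    simp only [Set.mem_setOf_eq, Set.mem_singleton_iff]
    constructor
    · rintro ⟨h1, h2, h3, h4, h5⟩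
      by_contra hne
      rcases Nat.lt_or_ge i j with hlt | hge
      · have := (phi_lt_iff a b i j hb hba h3 h4 hja hjb).mpr hlt; omega
      · have hlt : j < i := by omega
        have := (phi_lt_iff a b j i hb hba hja hjb h3 h4).mpr hlt; omega
    · rintro rfl; exact ⟨hj1, hjn, hja, hjb, rfl⟩
  unfold psiPair
  rw [hset]
  exact csInf_singleton j

lemma hPair_phi (n : ℕ) (h : ℕ → ℕ) (a b q : ℕ) (hb : 1 ≤ b) (hba : b < a)
    (han : a ≤ n) (h1 : 1 ≤ q) (h2 : q ≤ n) (h3 : q ≠ a) (h4 : q ≠ b) :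
    hPair n h a b (phiPair a b q) = phiPair a b (h q) := by
  unfold hPair
  rw [psi_phi n a b q hb hba han h1 h2 h3 h4]

lemma permOn_symm (n : ℕ) (w : Equiv.Perm ℕ) (hw : PermOn n w) {s : ℕ}
    (h1 : 1 ≤ s) (h2 : s ≤ n) : 1 ≤ w.symm s ∧ w.symm s ≤ n := by
  by_contra hc
  have h3 : w.symm s ∉ Set.Icc 1 n := by
    simp only [Set.mem_Icc]; omega
  have h5 := hw _ h3
  rw [Equiv.apply_symm_apply] at h5
  omega

/-- An auxiliary function: the permutation of `{1,…,n}` sending `n-1 ↦ u`, `n ↦ v`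
and `{1,…,n-2}` order-preservingly onto `{1,…,n}∖{u,v}` (where `v < u`). -/
def moveFun (n u v i : ℕ) : ℕ :=
  if i < 1 ∨ n < i then i
  else if i = n - 1 then u
  else if i = n then v
  else if i < v then i
  else if i + 2 ≤ u then i + 1
  else i + 2

def moveInv (n u v j : ℕ) : ℕ :=
  if j < 1 ∨ n < j then j
  else if j = u then n - 1
  else if j = v then n
  else if j < v then j
  else if j < u then j - 1
  else j - 2

set_option maxHeartbeats 1000000 in
lemma move_left (n u v : ℕ) (hv : 1 ≤ v) (hvu : v < u) (hun : u ≤ n)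
    (hn : 3 ≤ n) : ∀ i, moveInv n u v (moveFun n u v i) = i := by
  intro i; unfold moveFun moveInv; split_ifs <;> omega

set_option maxHeartbeats 1000000 in
lemma move_right (n u v : ℕ) (hv : 1 ≤ v) (hvu : v < u) (hun : u ≤ n)
    (hn : 3 ≤ n) : ∀ j, moveFun n u v (moveInv n u v j) = j := by
  intro j; unfold moveFun moveInv; split_ifs <;> omega

def gadget (n u v : ℕ) (hv : 1 ≤ v) (hvu : v < u) (hun : u ≤ n) (hn : 3 ≤ n) :
    Equiv.Perm ℕ where
  toFun := moveFun n u v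
  invFun := moveInv n u v
  left_inv := move_left n u v hv hvu hun hn
  right_inv := move_right n u v hv hvu hun hn

lemma gadget_apply (n u v : ℕ) (hv : 1 ≤ v) (hvu : v < u) (hun : u ≤ n)
    (hn : 3 ≤ n) (i : ℕ) : gadget n u v hv hvu hun hn i = moveFun n u v i := rfl

lemma gadget_symm_apply (n u v : ℕ) (hv : 1 ≤ v) (hvu : v < u) (hun : u ≤ n)
    (hn : 3 ≤ n) (j : ℕ) :
    (gadget n u v hv hvu hun hn).symm j = moveInv n u v j := rfl

lemma conj_apply (Q w P : Equiv.Perm ℕ) (i : ℕ) :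
    (Q⁻¹ * w * P) i = Q⁻¹ (w (P i)) := rfl

lemma conj_symm (Q w P : Equiv.Perm ℕ) (t : ℕ) :
    (Q⁻¹ * w * P).symm t = P.symm (w.symm (Q t)) := by
  rw [Equiv.symm_apply_eq]
  simp [Equiv.Perm.mul_apply]

lemma conj_unapply (Q w P : Equiv.Perm ℕ) (i : ℕ) :
    Q ((Q⁻¹ * w * P) (P.symm i)) = w i := by
  simp [Equiv.Perm.mul_apply]

theorem stmt12 (n : ℕ) (h : ℕ → ℕ) (hn : 3 ≤ n) (hh : IsHessenberg n h)
    (habel : IhAbelian n h) (μ₁ μ₂ : ℕ) (hμ : μ₂ ≤ μ₁) (hμsum : μ₁ + μ₂ = n - 2)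
    (a b : ℕ) (hIb : (a, b) ∈ Ih n h) :
    Set.ncard {w : Equiv.Perm ℕ | memDab n h (μ₁ + 1) a b w} =
      Set.ncard {x : Equiv.Perm ℕ | PermOn (n - 2) x ∧
        JCond (n - 2) (hPair n h a b) μ₁ x} := by
  have hb1 : 1 ≤ b := hIb.1
  have hba : b < a := hIb.2.1
  have han : a ≤ n := hIb.2.2.1
  have hhb : h b < a := hIb.2.2.2
  have hm2 : μ₁ + 2 ≤ n := by omega
  have hμ1 : 1 ≤ μ₁ := by omega
  -- abelianity consequences
  have Fact1 : ∀ p, a < p → p ≤ n → p ≤ h a := by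
    intro p hp1 hp2
    by_contra hc
    have hmem : (p, a) ∈ Ih n h := by
      simp only [Ih, Set.mem_setOf_eq]; omega
    exact habel ⟨p, a, b, hmem, hIb⟩
  have Fact2 : ∀ q, 1 ≤ q → q < b → b ≤ h q := by
    intro q hq1 hq2
    by_contra hc
    have hmem : (b, q) ∈ Ih n h := by
      simp only [Ih, Set.mem_setOf_eq]; omega
    exact habel ⟨a, b, q, hIb, hmem⟩
  -- the position and value reindexing permutations
  set P : Equiv.Perm ℕ := gadget n a b hb1 hba han hn with hPdef
  set Q : Equiv.Perm ℕ :=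
    (gadget n (μ₁ + 2) (μ₁ + 1) (by omega) (by omega) hm2 hn) *
      Equiv.swap (n - 1) n with hQdef
  -- computations for P
  have hPn1 : P (n - 1) = a := by
    rw [hPdef, gadget_apply]; unfold moveFun; split_ifs <;> omega
  have hPn : P n = b := by
    rw [hPdef, gadget_apply]; unfold moveFun; split_ifs <;> omega
  have hPout : ∀ i, i = 0 ∨ n < i → P i = i := by
    intro i hi
    rw [hPdef, gadget_apply]; unfold moveFun; split_ifs <;> omega
  have hPsout : ∀ i, i = 0 ∨ n < i → P.symm i = i := by
    intro i hi
    rw [hPdef, gadget_symm_apply]; unfold moveInv; split_ifs <;> omega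
  have hPsphi : ∀ j, 1 ≤ j → j ≤ n → j ≠ a → j ≠ b →
      P.symm j = phiPair a b j := by
    intro j h1 h2 h3 h4
    rw [hPdef, gadget_symm_apply]; unfold moveInv phiPair; split_ifs <;> omega
  -- computations for Q
  have hQt : ∀ t, t ≤ n - 2 → Q t = if t ≤ μ₁ then t else t + 2 := by
    intro t ht
    have hsw : Equiv.swap (n - 1) n t = t :=
      Equiv.swap_apply_of_ne_of_ne (by omega) (by omega)
    rw [hQdef, Equiv.Perm.mul_apply, hsw, gadget_apply]
    unfold moveFun; split_ifs <;> omega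
  have hQn1 : Q (n - 1) = μ₁ + 1 := by
    rw [hQdef, Equiv.Perm.mul_apply, Equiv.swap_apply_left, gadget_apply]
    unfold moveFun; split_ifs <;> omega
  have hQn : Q n = μ₁ + 2 := by
    rw [hQdef, Equiv.Perm.mul_apply, Equiv.swap_apply_right, gadget_apply]
    unfold moveFun; split_ifs <;> omega
  have hQout : ∀ i, i = 0 ∨ n < i → Q i = i := by
    intro i hi
    have hsw : Equiv.swap (n - 1) n i = i :=
      Equiv.swap_apply_of_ne_of_ne (by omega) (by omega)
    rw [hQdef, Equiv.Perm.mul_apply, hsw, gadget_apply]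
    unfold moveFun; split_ifs <;> omega
  -- transfer of the J conditions
  have transfer : ∀ w : Equiv.Perm ℕ, PermOn n w → w a = μ₁ + 1 →
      w b = μ₁ + 2 →
      (JCond n h (μ₁ + 1) w ↔ JCond (n - 2) (hPair n h a b) μ₁ (Q⁻¹ * w * P)) := by
    intro w hwPerm hwa hwb
    have hsa : w.symm (μ₁ + 1) = a := by rw [Equiv.symm_apply_eq, hwa]
    have hsb : w.symm (μ₁ + 2) = b := by rw [Equiv.symm_apply_eq, hwb]
    have hmem : ∀ s, 1 ≤ s → s ≤ n → 1 ≤ w.symm s ∧ w.symm s ≤ n :=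
      fun s h1 h2 => permOn_symm n w hwPerm h1 h2
    have hnea : ∀ s, s ≠ μ₁ + 1 → w.symm s ≠ a := by
      intro s hs hc
      exact hs (w.symm.injective (by rw [hc, hsa]))
    have hneb : ∀ s, s ≠ μ₁ + 2 → w.symm s ≠ b := by
      intro s hs hc
      exact hs (w.symm.injective (by rw [hc, hsb]))
    have keyLow : ∀ s, 1 ≤ s → s ≤ μ₁ →
        (Q⁻¹ * w * P).symm s = phiPair a b (w.symm s) := by
      intro s h1 h2
      rw [conj_symm, hQt s (by omega), if_pos h2,
        hPsphi _ (hmem s h1 (by omega)).1 (hmem s h1 (by omega)).2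
          (hnea s (by omega)) (hneb s (by omega))]
    have keyHigh : ∀ s, μ₁ + 3 ≤ s → s ≤ n →
        (Q⁻¹ * w * P).symm (s - 2) = phiPair a b (w.symm s) := by
      intro s h1 h2
      have hQs : Q (s - 2) = s := by
        rw [hQt (s - 2) (by omega)]; split_ifs <;> omega
      rw [conj_symm, hQs,
        hPsphi _ (hmem s (by omega) h2).1 (hmem s (by omega) h2).2
          (hnea s (by omega)) (hneb s (by omega))]
    constructor
    · intro hJ t ht1 ht2 ht3 hlt
      rcases Nat.lt_or_ge t μ₁ with hc | hc
      · have k1 := keyLow t ht1 (by omega)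
        have k2 := keyLow (t + 1) (by omega) (by omega)
        rw [k1, k2] at hlt ⊢
        rw [hPair_phi n h a b _ hb1 hba han (hmem (t + 1) (by omega) (by omega)).1
          (hmem (t + 1) (by omega) (by omega)).2 (hnea _ (by omega)) (hneb _ (by omega))]
        have hlt' : w.symm (t + 1) < w.symm t :=
          (phi_lt_iff a b _ _ hb1 hba (hnea _ (by omega)) (hneb _ (by omega))
            (hnea _ (by omega)) (hneb _ (by omega))).mp hlt
        have := hJ t ht1 (by omega) (by omega) hlt'
        exact (phi_le_iff a b _ _ hb1 hba (hnea _ (by omega)) (hneb _ (by omega))).mpr this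
      · have hc' : μ₁ + 1 ≤ t := by omega
        have k1 := keyHigh (t + 2) (by omega) (by omega)
        rw [show t + 2 - 2 = t from by omega] at k1
        have k2 := keyHigh (t + 3) (by omega) (by omega)
        rw [show t + 3 - 2 = t + 1 from by omega] at k2
        rw [k1, k2] at hlt ⊢
        rw [hPair_phi n h a b _ hb1 hba han (hmem (t + 3) (by omega) (by omega)).1
          (hmem (t + 3) (by omega) (by omega)).2 (hnea _ (by omega)) (hneb _ (by omega))]
        have hlt' : w.symm (t + 3) < w.symm (t + 2) :=
          (phi_lt_iff a b _ _ hb1 hba (hnea _ (by omega)) (hneb _ (by omega))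
            (hnea _ (by omega)) (hneb _ (by omega))).mp hlt
        have := hJ (t + 2) (by omega) (by omega) (by omega) hlt'
        exact (phi_le_iff a b _ _ hb1 hba (hnea _ (by omega)) (hneb _ (by omega))).mpr this
    · intro hJ s hs1 hs2 hs3 hlt
      rcases (by omega : s + 1 ≤ μ₁ ∨ s = μ₁ ∨ s = μ₁ + 2 ∨ μ₁ + 3 ≤ s) with
        hc | hc | hc | hc
      · have k1 := keyLow s hs1 (by omega)
        have k2 := keyLow (s + 1) (by omega) hc
        have hlt' := (phi_lt_iff a b _ _ hb1 hba (hnea _ (by omega)) (hneb _ (by omega))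
          (hnea _ (by omega)) (hneb _ (by omega))).mpr hlt
        rw [← k1, ← k2] at hlt'
        have hx := hJ s hs1 (by omega) (by omega) hlt'
        rw [k1, k2, hPair_phi n h a b _ hb1 hba han (hmem (s + 1) (by omega) (by omega)).1
          (hmem (s + 1) (by omega) (by omega)).2 (hnea _ (by omega)) (hneb _ (by omega))] at hx
        exact (phi_le_iff a b _ _ hb1 hba (hnea _ (by omega)) (hneb _ (by omega))).mp hx
      · rw [hc] at hlt ⊢
        rw [hsa] at hlt ⊢
        exact Fact1 _ hlt (hmem μ₁ (by omega) (by omega)).2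
      · rw [hc] at hlt ⊢
        rw [show μ₁ + 2 + 1 = μ₁ + 3 from rfl] at hlt ⊢
        rw [hsb] at hlt ⊢
        exact Fact2 _ (hmem (μ₁ + 3) (by omega) (by omega)).1 hlt
      · have k1 := keyHigh s hc (by omega)
        have k2 := keyHigh (s + 1) (by omega) (by omega)
        rw [show s + 1 - 2 = s - 2 + 1 from by omega] at k2
        have hlt' := (phi_lt_iff a b _ _ hb1 hba (hnea _ (by omega)) (hneb _ (by omega))
          (hnea _ (by omega)) (hneb _ (by omega))).mpr hlt
        rw [← k1, ← k2] at hlt'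
        have hx := hJ (s - 2) (by omega) (by omega) (by omega) hlt'
        rw [k1, k2, hPair_phi n h a b _ hb1 hba han (hmem (s + 1) (by omega) (by omega)).1
          (hmem (s + 1) (by omega) (by omega)).2 (hnea _ (by omega)) (hneb _ (by omega))] at hx
        exact (phi_le_iff a b _ _ hb1 hba (hnea _ (by omega)) (hneb _ (by omega))).mp hx
  -- the main equivalence
  have main_iff : ∀ w : Equiv.Perm ℕ, memDab n h (μ₁ + 1) a b w ↔
      (PermOn (n - 2) (Q⁻¹ * w * P) ∧
        JCond (n - 2) (hPair n h a b) μ₁ (Q⁻¹ * w * P)) := by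
    intro w
    constructor
    · rintro ⟨⟨hwPerm, hwJ, _hwI⟩, hwa, hwb⟩
      have hwb2 : w b = μ₁ + 2 := hwb
      constructor
      · intro i hi
        have hcase : i = 0 ∨ i = n - 1 ∨ i = n ∨ n < i := by
          simp only [Set.mem_Icc] at hi; omega
        rw [conj_apply]
        rcases hcase with hc | hc | hc | hc
        · subst hc
          rw [hPout 0 (Or.inl rfl), hwPerm 0 (by simp only [Set.mem_Icc]; omega),
            Equiv.Perm.inv_eq_iff_eq, hQout 0 (Or.inl rfl)]
        · subst hc
          rw [hPn1, hwa, Equiv.Perm.inv_eq_iff_eq, hQn1]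
        · subst hc
          rw [hPn, hwb2, Equiv.Perm.inv_eq_iff_eq, hQn]
        · rw [hPout i (Or.inr hc), hwPerm i (by simp only [Set.mem_Icc]; omega),
            Equiv.Perm.inv_eq_iff_eq, hQout i (Or.inr hc)]
      · exact (transfer w hwPerm hwa hwb2).mp hwJ
    · rintro ⟨hxPerm, hxJ⟩
      have hwa : w a = μ₁ + 1 := by
        have h1 : (Q⁻¹ * w * P) (n - 1) = n - 1 :=
          hxPerm (n - 1) (by simp only [Set.mem_Icc]; omega)
        rw [conj_apply, hPn1, Equiv.Perm.inv_eq_iff_eq, hQn1] at h1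
        exact h1
      have hwb2 : w b = μ₁ + 2 := by
        have h1 : (Q⁻¹ * w * P) n = n :=
          hxPerm n (by simp only [Set.mem_Icc]; omega)
        rw [conj_apply, hPn, Equiv.Perm.inv_eq_iff_eq, hQn] at h1
        exact h1
      have hwPerm : PermOn n w := by
        intro i hi
        have hcase : i = 0 ∨ n < i := by
          simp only [Set.mem_Icc] at hi; omega
        rw [← conj_unapply Q w P i, hPsout i hcase,
          hxPerm i (by simp only [Set.mem_Icc]; omega), hQout i hcase]
      have hsa : w.symm (μ₁ + 1) = a := by rw [Equiv.symm_apply_eq, hwa]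
      have hsb : w.symm (μ₁ + 2) = b := by rw [Equiv.symm_apply_eq, hwb2]
      refine ⟨⟨hwPerm, (transfer w hwPerm hwa hwb2).mpr hxJ, ?_⟩, hwa, hwb2⟩
      constructor
      · rw [show μ₁ + 1 + 1 = μ₁ + 2 from rfl, hsa, hsb]; exact hba
      · rw [show μ₁ + 1 + 1 = μ₁ + 2 from rfl, hsa, hsb]; exact hhb
  -- conclude by counting via the bijection
  have e1 : ∀ w : Equiv.Perm ℕ, Q * (Q⁻¹ * w * P) * P⁻¹ = w := by
    intro w; group
  have hinj : Function.Injective (fun w : Equiv.Perm ℕ => Q⁻¹ * w * P) := by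
    intro w1 w2 h12
    rw [← e1 w1, ← e1 w2]
    simp only at h12
    rw [h12]
  have himg : (fun w : Equiv.Perm ℕ => Q⁻¹ * w * P) ''
      {w : Equiv.Perm ℕ | memDab n h (μ₁ + 1) a b w} =
      {x : Equiv.Perm ℕ | PermOn (n - 2) x ∧
        JCond (n - 2) (hPair n h a b) μ₁ x} := by
    ext x
    simp only [Set.mem_image, Set.mem_setOf_eq]
    constructor
    · rintro ⟨w, hw, rfl⟩
      exact (main_iff w).mp hw
    · intro hx
      refine ⟨Q * x * P⁻¹, (main_iff _).mpr ?_, by group⟩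
      rw [show Q⁻¹ * (Q * x * P⁻¹) * P = x from by group]
      exact hx
  rw [← Set.ncard_image_of_injective
    {w : Equiv.Perm ℕ | memDab n h (μ₁ + 1) a b w} hinj, himg]
end

section
/- Let n ≥ 3, let h be a Hessenberg function on {1,…,n} with I_h abelian, let (a,b) ∈ I_h and T = {a,b}, let ν₁, ν₂ ≥ 1 with ν₁ + ν₂ = n, and let w ∈ D_ν(a,b). Then |inv_h(σ_ν ∘ w)| = deg(T) + #{(i,j) : i > j, i ≤ h(j), i ∉ {a,b}, j ∉ {a,b}, and w(i) < w(j)}, where deg(T) = #{j < b : b ≤ h(j)} + #{j < a : a ≤ h(j)}. -/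
/-- `σ` is the permutation `σ_ν` of `{1,…,n}`. -/
def IsSigma (n ν₁ : ℕ) (σ : Equiv.Perm ℕ) : Prop :=
  PermOn n σ ∧ σ ν₁ = 1 ∧ σ (ν₁ + 1) = 2 ∧
  ∀ i j, i ∈ Set.Icc 1 n → j ∈ Set.Icc 1 n →
    i ≠ ν₁ → i ≠ ν₁ + 1 → j ≠ ν₁ → j ≠ ν₁ + 1 → i < j → σ i < σ j

/-- `|inv_h(w)|`: the number of pairs `(i,j)` with `i > j`, `w(i) < w(j)`, `i ≤ h(j)`. -/
def invhCard (n : ℕ) (h : ℕ → ℕ) (w : Equiv.Perm ℕ) : ℕ :=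
  (((Finset.Icc 1 n) ×ˢ (Finset.Icc 1 n)).filter
    (fun p => p.2 < p.1 ∧ w p.1 < w p.2 ∧ p.1 ≤ h p.2)).card

/-- `deg(T) = #{j < b : b ≤ h(j)} + #{j < a : a ≤ h(j)}` for `T = {a,b}`. -/
def degPair (n : ℕ) (h : ℕ → ℕ) (a b : ℕ) : ℕ :=
  ((Finset.Ico 1 b).filter (fun j => b ≤ h j)).card +
  ((Finset.Ico 1 a).filter (fun j => a ≤ h j)).card

/-! `σ_ν ∘ w` sends `a` and `b` to `1` and `2`, below all its other values, and is
order-isomorphic to `w` on the remaining positions. Hence every pair `(a, j)` with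
`j < a ≤ h j` and every pair `(b, j)` with `j < b ≤ h j` is an `h`-inversion, which accounts
for `deg T`; no pair with `a` or `b` as its smaller entry is an inversion, the pair `(a, b)` is
excluded by `h b < a`, and the pairs avoiding `a` and `b` are `h`-inversions of `σ_ν ∘ w` exactly
when they are `h`-inversions of `w`. -/

open Finset

lemma PermOn.apply_mem_Icc {n : ℕ} {w : Equiv.Perm ℕ} (hw : PermOn n w) {i : ℕ}
    (hi : i ∈ Set.Icc 1 n) : w i ∈ Set.Icc 1 n := by
  by_contra hwi
  have hfix : w (w i) = w i := hw _ hwi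
  rw [w.injective hfix] at hwi
  exact hwi hi

lemma PermOn.apply_mem_Icc_diff {n ν₁ a b k : ℕ} {w : Equiv.Perm ℕ} (hw : PermOn n w)
    (hwa : w a = ν₁) (hwb : w b = ν₁ + 1) (hk : k ∈ Set.Icc 1 n) (hka : k ≠ a) (hkb : k ≠ b) :
    w k ∈ Set.Icc 1 n \ {ν₁, ν₁ + 1} := by
  refine ⟨hw.apply_mem_Icc hk, ?_⟩
  rintro (hk' | hk')
  · exact hka (w.injective (hk'.trans hwa.symm))
  · exact hkb (w.injective (hk'.trans hwb.symm))

namespace IsSigma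

variable {n ν₁ : ℕ} {σ : Equiv.Perm ℕ}

lemma strictMonoOn (hσ : IsSigma n ν₁ σ) : StrictMonoOn σ (Set.Icc 1 n \ {ν₁, ν₁ + 1}) := by
  rintro i ⟨hi, hi'⟩ j ⟨hj, hj'⟩ hij
  simp only [Set.mem_insert_iff, Set.mem_singleton_iff, not_or] at hi' hj'
  exact hσ.2.2.2 i j hi hj hi'.1 hi'.2 hj'.1 hj'.2 hij

lemma three_le_apply (hσ : IsSigma n ν₁ σ) {k : ℕ} (hk : k ∈ Set.Icc 1 n \ {ν₁, ν₁ + 1}) :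
    3 ≤ σ k := by
  obtain ⟨hσP, hσ1, hσ2, -⟩ := hσ
  obtain ⟨hk, hk'⟩ := hk
  simp only [Set.mem_insert_iff, Set.mem_singleton_iff, not_or] at hk'
  have hne1 : σ k ≠ 1 := fun he => hk'.1 (σ.injective (he.trans hσ1.symm))
  have hne2 : σ k ≠ 2 := fun he => hk'.2 (σ.injective (he.trans hσ2.symm))
  have := (hσP.apply_mem_Icc hk).1
  omega

end IsSigma

section HInversions

variable {n a b : ℕ} {h u : ℕ → ℕ}

lemma card_filter_fst_eq_card_Ico {c : ℕ} (hc : c ≤ n) (q : ℕ → Prop) [DecidablePred q] :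
    #((Icc 1 n ×ˢ Icc 1 n).filter (fun p => p.1 = c ∧ p.2 < c ∧ q p.2)) =
      #((Ico 1 c).filter q) := by
  suffices hrow : (Icc 1 n ×ˢ Icc 1 n).filter (fun p => p.1 = c ∧ p.2 < c ∧ q p.2) =
      ((Ico 1 c).filter q).map (Function.Embedding.sectR c ℕ) by
    rw [hrow, card_map]
  ext ⟨i, j⟩
  simp only [mem_filter, mem_product, mem_Icc, mem_map, mem_Ico, Function.Embedding.sectR_apply,
    Prod.mk.injEq]
  constructor
  · rintro ⟨⟨-, hj1, -⟩, rfl, hj, hq⟩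
    exact ⟨j, ⟨⟨hj1, hj⟩, hq⟩, rfl, rfl⟩
  · rintro ⟨j, ⟨⟨hj1, hj⟩, hq⟩, rfl, rfl⟩
    exact ⟨⟨⟨by omega, hc⟩, hj1, by omega⟩, rfl, hj, hq⟩

lemma hInversion_iff_of_two_least (hhb : h b < a) (hba : b < a)
    (hlow : ∀ k ∈ Set.Icc 1 n, k ≠ a → k ≠ b → u a < u k ∧ u b < u k)
    {i j : ℕ} (hi : i ∈ Set.Icc 1 n) (hj : j ∈ Set.Icc 1 n) :
    (j < i ∧ u i < u j ∧ i ≤ h j) ↔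
      (i = a ∧ j < a ∧ a ≤ h j) ∨ (i = b ∧ j < b ∧ b ≤ h j) ∨
        (j < i ∧ i ≤ h j ∧ i ≠ a ∧ i ≠ b ∧ j ≠ a ∧ j ≠ b ∧ u i < u j) := by
  by_cases hia : i = a
  · subst hia
    have hjb : j < i → i ≤ h j → j ≠ b := by rintro - hij rfl; omega
    constructor
    · rintro ⟨hji, -, hij⟩
      exact Or.inl ⟨rfl, hji, hij⟩
    · rintro (⟨-, hji, hij⟩ | ⟨rfl, -⟩ | ⟨-, -, hne, -⟩)
      · exact ⟨hji, (hlow j hj hji.ne (hjb hji hij)).1, hij⟩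
      · omega
      · exact absurd rfl hne
  by_cases hib : i = b
  · subst hib
    constructor
    · rintro ⟨hji, -, hij⟩
      exact Or.inr (Or.inl ⟨rfl, hji, hij⟩)
    · rintro (⟨rfl, -⟩ | ⟨-, hji, hij⟩ | ⟨-, -, -, hne, -⟩)
      · exact absurd rfl hia
      · exact ⟨hji, (hlow j hj (by omega) hji.ne).2, hij⟩
      · exact absurd rfl hne
  constructor
  · rintro ⟨hji, hu, hij⟩
    have hja : j ≠ a := by rintro rfl; exact absurd hu (hlow i hi hia hib).1.not_gt
    have hjb : j ≠ b := by rintro rfl; exact absurd hu (hlow i hi hia hib).2.not_gt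
    exact Or.inr (Or.inr ⟨hji, hij, hia, hib, hja, hjb, hu⟩)
  · rintro (⟨hia', -⟩ | ⟨hib', -⟩ | ⟨hji, hij, -, -, -, -, hu⟩)
    · exact absurd hia' hia
    · exact absurd hib' hib
    · exact ⟨hji, hu, hij⟩

lemma card_hInversions_eq_of_two_least (ha : a ≤ n) (hhb : h b < a) (hba : b < a)
    (hlow : ∀ k ∈ Set.Icc 1 n, k ≠ a → k ≠ b → u a < u k ∧ u b < u k) :
    #((Icc 1 n ×ˢ Icc 1 n).filter (fun p => p.2 < p.1 ∧ u p.1 < u p.2 ∧ p.1 ≤ h p.2)) =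
      degPair n h a b +
        #((Icc 1 n ×ˢ Icc 1 n).filter (fun p => p.2 < p.1 ∧ p.1 ≤ h p.2 ∧ p.1 ≠ a ∧ p.1 ≠ b ∧
          p.2 ≠ a ∧ p.2 ≠ b ∧ u p.1 < u p.2)) := by
  rw [filter_congr fun p hp => hInversion_iff_of_two_least hhb hba hlow
      (mem_Icc.1 (mem_product.1 hp).1) (mem_Icc.1 (mem_product.1 hp).2),
    filter_or, card_union_of_disjoint, filter_or, card_union_of_disjoint,
    card_filter_fst_eq_card_Ico ha (a ≤ h ·),
    card_filter_fst_eq_card_Ico (hba.le.trans ha) (b ≤ h ·), degPair, add_assoc, add_left_comm]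
  · rw [disjoint_filter]
    exact fun p _ hpb hp => hp.2.2.2.1 hpb.1
  · rw [disjoint_filter]
    rintro p - hpa (⟨hpb, -⟩ | ⟨-, -, hpa', -⟩)
    · exact hba.ne (hpb.symm.trans hpa.1)
    · exact hpa' hpa.1

end HInversions

theorem stmt14_general (n : ℕ) (h : ℕ → ℕ) (a b : ℕ) (hIb : (a, b) ∈ Ih n h)
    (ν₁ : ℕ) (w : Equiv.Perm ℕ) (hw : memDab n h ν₁ a b w)
    (σ : Equiv.Perm ℕ) (hσ : IsSigma n ν₁ σ) :
    invhCard n h (σ * w) =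
      degPair n h a b +
        (((Finset.Icc 1 n) ×ˢ (Finset.Icc 1 n)).filter
          (fun p => p.2 < p.1 ∧ p.1 ≤ h p.2 ∧ p.1 ≠ a ∧ p.1 ≠ b ∧
            p.2 ≠ a ∧ p.2 ≠ b ∧ w p.1 < w p.2)).card := by
  obtain ⟨⟨hwP, -, -⟩, hwa, hwb⟩ := hw
  obtain ⟨-, hba, han, hhb⟩ := hIb
  have hlow : ∀ k ∈ Set.Icc 1 n, k ≠ a → k ≠ b →
      (σ * w) a < (σ * w) k ∧ (σ * w) b < (σ * w) k := by
    intro k hk hka hkb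
    have := hσ.three_le_apply (hwP.apply_mem_Icc_diff hwa hwb hk hka hkb)
    simp only [Equiv.Perm.mul_apply, hwa, hwb, hσ.2.1, hσ.2.2.1]
    omega
  have hcmp : ∀ i ∈ Set.Icc 1 n, ∀ j ∈ Set.Icc 1 n, i ≠ a → i ≠ b → j ≠ a → j ≠ b →
      ((σ * w) i < (σ * w) j ↔ w i < w j) := fun i hi j hj hia hib hja hjb =>
    hσ.strictMonoOn.lt_iff_lt (hwP.apply_mem_Icc_diff hwa hwb hi hia hib)
      (hwP.apply_mem_Icc_diff hwa hwb hj hja hjb)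
  rw [invhCard, card_hInversions_eq_of_two_least han hhb hba hlow]
  congr 2
  refine filter_congr fun p hp => ?_
  obtain ⟨hp1, hp2⟩ := mem_product.1 hp
  constructor <;> rintro ⟨hji, hij, h1a, h1b, h2a, h2b, hu⟩
  · exact ⟨hji, hij, h1a, h1b, h2a, h2b,
      (hcmp _ (mem_Icc.1 hp1) _ (mem_Icc.1 hp2) h1a h1b h2a h2b).1 hu⟩
  · exact ⟨hji, hij, h1a, h1b, h2a, h2b,
      (hcmp _ (mem_Icc.1 hp1) _ (mem_Icc.1 hp2) h1a h1b h2a h2b).2 hu⟩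

theorem stmt14 (n : ℕ) (h : ℕ → ℕ) (hn : 3 ≤ n) (hh : IsHessenberg n h)
    (habel : IhAbelian n h) (a b : ℕ) (hIb : (a, b) ∈ Ih n h)
    (ν₁ ν₂ : ℕ) (hν₁ : 1 ≤ ν₁) (hν₂ : 1 ≤ ν₂) (hsum : ν₁ + ν₂ = n)
    (w : Equiv.Perm ℕ) (hw : memDab n h ν₁ a b w)
    (σ : Equiv.Perm ℕ) (hσ : IsSigma n ν₁ σ) :
    invhCard n h (σ * w) =
      degPair n h a b +
        (((Finset.Icc 1 n) ×ˢ (Finset.Icc 1 n)).filter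
          (fun p => p.2 < p.1 ∧ p.1 ≤ h p.2 ∧ p.1 ≠ a ∧ p.1 ≠ b ∧
            p.2 ≠ a ∧ p.2 ≠ b ∧ w p.1 < w p.2)).card :=
  stmt14_general n h a b hIb ν₁ w hw σ hσ
end

section
/- For every n ≥ 1, the number of Hessenberg functions h : {1,…,n} → {1,…,n} such that I_h is abelian and strictly negative (i.e., h(i) ≥ i+1 for all 1 ≤ i ≤ n−1) equals 2^{n−1} − (n−1). -/
/-!
Put `a = h 1`. Abelianity of `I_h` forces `h k = n` for `a < k ≤ n`, so `h` is determined by its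
values on `2, …, a`: a weakly increasing sequence in `[a, n]` whose last term exceeds `a` unless
`a = n`. Stars and bars, `k ↦ h k + k - (a + 1)`, turns this sequence into a subset of
`{1, …, n - 1}` of size `a - 1`, and the condition on the last term rules out exactly the initial
segments `{1, …, b}` with `b < n - 1`. Hence there are `2 ^ (n - 1) - (n - 1)` such `h`.
-/

open Finset

theorem StrictMonoOn.apply_add_sub_le {f : ℕ → ℕ} {m i j : ℕ}
    (hf : StrictMonoOn f (Set.Iio m)) (hij : i ≤ j) (hj : j < m) : f i + (j - i) ≤ f j := by
  induction j, hij using Nat.le_induction with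
  | base => simp
  | succ j hij ih =>
    have := hf (show j ∈ Set.Iio m by simp only [Set.mem_Iio]; omega) hj (by omega)
    have := ih (by omega)
    omega

namespace Nat

theorem strictMonoOn_nth_mem_finset (S : Finset ℕ) :
    StrictMonoOn (nth (· ∈ S)) (Set.Iio #S) := by
  simpa using nth_strictMonoOn (p := (· ∈ S)) S.finite_toSet

theorem nth_mem_finset {S : Finset ℕ} {i : ℕ} (hi : i < #S) : nth (· ∈ S) i ∈ S := by
  simpa using nth_mem_of_lt_card (p := (· ∈ S)) S.finite_toSet (by simpa using hi)

theorem image_range_nth_mem_finset (S : Finset ℕ) : (range #S).image (nth (· ∈ S)) = S := by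
  apply coe_injective
  simpa using image_nth_Iio_card (p := (· ∈ S)) S.finite_toSet

theorem nth_mem_image_range {f : ℕ → ℕ} {m : ℕ} (hf : StrictMonoOn f (Set.Iio m)) {i : ℕ}
    (hi : i < m) : nth (· ∈ (range m).image f) i = f i := by
  set s := (range m).image f
  have hs : Set.ofPred (· ∈ s) = f '' Set.Iio m := by
    ext; simp [s]
  have hcard : #s = m := by
    rw [Finset.card_image_of_injOn (by simpa using hf.injOn), card_range]
  have hidx : {n | ∀ hfin : (Set.ofPred (· ∈ s)).Finite, n < #hfin.toFinset} = Set.Iio m := by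
    ext n
    have htoFinset : ∀ hfin : (Set.ofPred (· ∈ s)).Finite, hfin.toFinset = s := fun _ => by
      ext; simp
    simp only [htoFinset, hcard]
    exact ⟨fun h => h s.finite_toSet, fun h _ => h⟩
  have hmaps := Set.mapsTo_image f (Set.Iio m)
  have hsurj := Set.surjOn_image f (Set.Iio m)
  rw [← hs, ← hidx] at hmaps hsurj
  rw [← hidx] at hf
  exact (eq_nth_of_strictMonoOn_of_mapsTo_of_surjOn f hsurj hmaps hf (by rwa [hidx])).symm

end Nat

theorem mem_Ih {n i j : ℕ} {h : ℕ → ℕ} : (i, j) ∈ Ih n h ↔ 1 ≤ j ∧ j < i ∧ i ≤ n ∧ h j < i :=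
  Iff.rfl

namespace IsHessenberg

variable {n : ℕ} {h : ℕ → ℕ}

theorem monotoneOn (H : IsHessenberg n h) : MonotoneOn h (Set.Icc 1 n) :=
  monotoneOn_of_le_succ Set.ordConnected_Icc fun k _ hk hk' => by
    simp only [Order.succ_eq_add_one, Set.mem_Icc] at hk hk'
    exact H.2 k hk.1 (by omega)

theorem ihAbelian_iff (H : IsHessenberg n h) :
    IhAbelian n h ↔ ∀ j, h 1 < j → j < n → h j = n := by
  constructor
  · intro hab j hj hjn
    have h1 := H.1 1 le_rfl (by omega)
    have hj' := H.1 j (by omega) hjn.le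
    by_contra hne
    exact hab ⟨n, j, 1, mem_Ih.2 ⟨by omega, hjn, le_rfl, by omega⟩,
      mem_Ih.2 ⟨le_rfl, by omega, hjn.le, hj⟩⟩
  · rintro hcond ⟨i, j, k, hij, hjk⟩
    obtain ⟨-, hji, hin, hhj⟩ := mem_Ih.1 hij
    obtain ⟨hk, hkj, -, hhk⟩ := mem_Ih.1 hjk
    have h1k : h 1 ≤ h k := H.monotoneOn ⟨le_rfl, by omega⟩ ⟨hk, by omega⟩ hk
    have := hcond j (by omega) (by omega)
    omega

end IsHessenberg

def abelianStrictHessenberg (n : ℕ) : Set (ℕ → ℕ) :=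
  {h | (∀ i, i ∉ Set.Icc 1 n → h i = 0) ∧ IsHessenberg n h ∧ IhAbelian n h ∧
    (∀ i, 1 ≤ i → i ≤ n - 1 → i + 1 ≤ h i)}

def codeSeq (h : ℕ → ℕ) (i : ℕ) : ℕ := h (i + 2) + (i + 1) - h 1

def hessCode (h : ℕ → ℕ) : Finset ℕ := (range (h 1 - 1)).image (codeSeq h)

noncomputable def hessOfCode (n : ℕ) (S : Finset ℕ) : ℕ → ℕ
  | 0 => 0
  | 1 => #S + 1
  | i + 2 => if n < i + 2 then 0 else if i < #S then Nat.nth (· ∈ S) i + (#S - i) else n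

-- The excluded initial segments include `∅ = Icc 1 0`.
def hessCodes (n : ℕ) : Finset (Finset ℕ) :=
  (Icc 1 (n - 1)).powerset \ (range (n - 1)).image (Icc 1)

theorem card_hessCodes (n : ℕ) : #(hessCodes n) = 2 ^ (n - 1) - (n - 1) := by
  have hinj : Function.Injective (Icc 1 : ℕ → Finset ℕ) := fun a b hab => by
    simpa using congrArg card hab
  have hsub : (range (n - 1)).image (Icc 1) ⊆ (Icc 1 (n - 1)).powerset := by
    intro x hx
    obtain ⟨b, hb, rfl⟩ := mem_image.1 hx
    exact mem_powerset.2 (Icc_subset_Icc le_rfl (by rw [mem_range] at hb; omega))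
  rw [hessCodes, card_sdiff_of_subset hsub, card_powerset, Nat.card_Icc,
    card_image_of_injective _ hinj, card_range, Nat.add_sub_cancel]

section Encoding

variable {n : ℕ} {h : ℕ → ℕ}

theorem apply_one_le (hh : h ∈ abelianStrictHessenberg n) : h 1 ≤ n := by
  rcases Nat.eq_zero_or_pos n with rfl | hn
  · simp [hh.1 1 (by simp)]
  · exact (hh.2.1.1 1 le_rfl hn).2

theorem apply_one_le_apply (hh : h ∈ abelianStrictHessenberg n) {k : ℕ} (hk : 1 ≤ k)
    (hkn : k ≤ n) : h 1 ≤ h k ∧ h k ≤ n :=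
  ⟨hh.2.1.monotoneOn ⟨le_rfl, hk.trans hkn⟩ ⟨hk, hkn⟩ hk, (hh.2.1.1 k hk hkn).2⟩

theorem apply_eq_of_apply_one_lt (hh : h ∈ abelianStrictHessenberg n) {k : ℕ} (hk : h 1 < k)
    (hkn : k ≤ n) : h k = n := by
  rcases hkn.lt_or_eq with hkn | rfl
  · exact hh.2.1.ihAbelian_iff.1 hh.2.2.1 k hk hkn
  · have := hh.2.1.1 k (by omega) le_rfl
    omega

theorem strictMonoOn_codeSeq (hh : h ∈ abelianStrictHessenberg n) :
    StrictMonoOn (codeSeq h) (Set.Iio (h 1 - 1)) := by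
  intro i hi j hj hij
  simp only [Set.mem_Iio] at hi hj
  have h1n := apply_one_le hh
  have hi' := apply_one_le_apply hh (k := i + 2) (by omega) (by omega)
  have hij' := hh.2.1.monotoneOn (a := i + 2) (b := j + 2) ⟨by omega, by omega⟩
    ⟨by omega, by omega⟩ (by omega)
  simp only [codeSeq]
  omega

theorem card_hessCode (hh : h ∈ abelianStrictHessenberg n) : #(hessCode h) = h 1 - 1 := by
  rw [hessCode, card_image_of_injOn (by simpa using (strictMonoOn_codeSeq hh).injOn), card_range]

theorem hessCode_mem_hessCodes (hn : 1 ≤ n) (hh : h ∈ abelianStrictHessenberg n) :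
    hessCode h ∈ hessCodes n := by
  have h1n := hh.2.1.1 1 le_rfl hn
  have hsub : hessCode h ⊆ Icc 1 (n - 1) := by
    intro x hx
    obtain ⟨i, hi, rfl⟩ := mem_image.1 hx
    simp only [mem_range] at hi
    have := apply_one_le_apply hh (k := i + 2) (by omega) (by omega)
    simp only [codeSeq, mem_Icc]
    omega
  refine mem_sdiff.2 ⟨mem_powerset.2 hsub, fun himg => ?_⟩
  obtain ⟨b, hb, hbh⟩ := mem_image.1 himg
  have hb' : b = h 1 - 1 := by simpa [card_hessCode hh] using congrArg card hbh
  simp only [mem_range] at hb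
  have h2 : 2 ≤ h 1 := hh.2.2.2 1 le_rfl (by omega)
  have hlt : h 1 < h (h 1) := hh.2.2.2 (h 1) (by omega) (by omega)
  have hlast : codeSeq h (h 1 - 2) ∈ Icc 1 b :=
    hbh ▸ mem_image_of_mem _ (mem_range.2 (by omega))
  simp only [codeSeq, mem_Icc, show h 1 - 2 + 2 = h 1 by omega] at hlast
  omega

theorem hessOfCode_hessCode (hn : 1 ≤ n) (hh : h ∈ abelianStrictHessenberg n) :
    hessOfCode n (hessCode h) = h := by
  have h1n := hh.2.1.1 1 le_rfl hn
  have hcard := card_hessCode hh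
  funext k
  match k with
  | 0 => exact (hh.1 0 (by simp)).symm
  | 1 => simp only [hessOfCode, hcard]; omega
  | i + 2 =>
    simp only [hessOfCode]
    split_ifs with hin hi
    · exact (hh.1 _ (by simp only [Set.mem_Icc]; omega)).symm
    · rw [hcard, hessCode, Nat.nth_mem_image_range (strictMonoOn_codeSeq hh) (by omega)]
      have := apply_one_le_apply hh (k := i + 2) (by omega) (by omega)
      simp only [codeSeq]
      omega
    · exact (apply_eq_of_apply_one_lt hh (by omega) (by omega)).symm

end Encoding

section Decoding

variable {n : ℕ} {S : Finset ℕ}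

theorem card_le_of_mem_hessCodes (hS : S ∈ hessCodes n) : #S ≤ n - 1 := by
  simpa using card_le_card (mem_powerset.1 (mem_sdiff.1 hS).1)

theorem nth_mem_Icc_of_mem_hessCodes (hS : S ∈ hessCodes n) {i : ℕ} (hi : i < #S) :
    Nat.nth (· ∈ S) i ∈ Icc 1 (n - 1) :=
  mem_powerset.1 (mem_sdiff.1 hS).1 (Nat.nth_mem_finset hi)

theorem ne_Icc_card_of_mem_hessCodes (hS : S ∈ hessCodes n) (hlt : #S + 1 < n) :
    S ≠ Icc 1 #S := fun hSeq =>
  (mem_sdiff.1 hS).2 (mem_image.2 ⟨#S, mem_range.2 (by omega), hSeq.symm⟩)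

theorem hessOfCode_add_two {i : ℕ} (hi : i < #S) (hin : i + 2 ≤ n) :
    hessOfCode n S (i + 2) = Nat.nth (· ∈ S) i + (#S - i) := by
  simp [hessOfCode, hi, hin]

theorem hessOfCode_of_card_lt {k : ℕ} (hk : #S + 1 < k) (hkn : k ≤ n) : hessOfCode n S k = n := by
  obtain ⟨i, rfl⟩ : ∃ i, k = i + 2 := ⟨k - 2, by omega⟩
  simp [hessOfCode, show ¬ n < i + 2 by omega, show ¬ i < #S by omega]

theorem hessOfCode_mem_Icc (hn : 1 ≤ n) (hS : S ∈ hessCodes n) {k : ℕ} (hk : 1 ≤ k)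
    (hkn : k ≤ n) : hessOfCode n S k ∈ Icc (#S + 1) n := by
  have hcard := card_le_of_mem_hessCodes hS
  rw [mem_Icc]
  match k with
  | 1 => exact ⟨le_rfl, by simp only [hessOfCode]; omega⟩
  | i + 2 =>
    by_cases hi : i < #S
    · have hmono := Nat.strictMonoOn_nth_mem_finset S
      have hlow := hmono.apply_add_sub_le (Nat.zero_le i) hi
      have hhigh := hmono.apply_add_sub_le (i := i) (j := #S - 1) (by omega) (by omega)
      have h0 := mem_Icc.1 (nth_mem_Icc_of_mem_hessCodes hS (i := 0) (by omega))
      have hlast := mem_Icc.1 (nth_mem_Icc_of_mem_hessCodes hS (i := #S - 1) (by omega))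
      rw [hessOfCode_add_two hi hkn]
      omega
    · rw [hessOfCode_of_card_lt (by omega) hkn]
      omega

theorem hessOfCode_le_succ (hn : 1 ≤ n) (hS : S ∈ hessCodes n) {k : ℕ} (hk : 1 ≤ k)
    (hkn : k < n) : hessOfCode n S k ≤ hessOfCode n S (k + 1) := by
  have hk' := mem_Icc.1 (hessOfCode_mem_Icc hn hS hk hkn.le)
  have hk1 := mem_Icc.1 (hessOfCode_mem_Icc hn hS (k := k + 1) (by omega) hkn)
  rcases Nat.lt_or_ge (#S + 1) (k + 1) with hlt | hle
  · rw [hessOfCode_of_card_lt hlt hkn]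
    exact hk'.2
  · match k with
    | 1 => exact hk1.1
    | i + 2 =>
      rw [hessOfCode_add_two (by omega) hkn.le, hessOfCode_add_two (by omega) hkn]
      have := Nat.strictMonoOn_nth_mem_finset S (a := i) (b := i + 1)
        (Set.mem_Iio.2 (by omega)) (Set.mem_Iio.2 (by omega)) (by omega)
      omega

theorem lt_hessOfCode_card_succ (hS : S ∈ hessCodes n) (hlt : #S + 1 < n) :
    #S + 1 < hessOfCode n S (#S + 1) := by
  have hne := ne_Icc_card_of_mem_hessCodes hS hlt
  obtain ⟨m, hm⟩ : ∃ m, #S = m + 1 := by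
    refine Nat.exists_eq_succ_of_ne_zero fun h0 => hne ?_
    simp [card_eq_zero.1 h0]
  rw [hm, hessOfCode_add_two (by omega) (by omega)]
  by_contra! hle
  refine hne (eq_of_subset_of_card_le (fun x hx => ?_) (by simp))
  rw [← Nat.image_range_nth_mem_finset S] at hx
  obtain ⟨i, hi, rfl⟩ := mem_image.1 hx
  rw [mem_range] at hi
  have hmono := (Nat.strictMonoOn_nth_mem_finset S).monotoneOn (a := i) (b := m)
    (Set.mem_Iio.2 hi) (Set.mem_Iio.2 (by omega)) (by omega)
  have := mem_Icc.1 (nth_mem_Icc_of_mem_hessCodes hS hi)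
  rw [mem_Icc]
  omega

theorem hessOfCode_mem (hn : 1 ≤ n) (hS : S ∈ hessCodes n) :
    hessOfCode n S ∈ abelianStrictHessenberg n := by
  have hmem := fun k => hessOfCode_mem_Icc hn hS (k := k)
  have H : IsHessenberg n (hessOfCode n S) := by
    refine ⟨fun k hk hkn => ⟨?_, (mem_Icc.1 (hmem k hk hkn)).2⟩,
      fun k hk hkn => hessOfCode_le_succ hn hS hk hkn⟩
    rcases Nat.lt_or_ge (#S + 1) k with hlt | hle
    · rw [hessOfCode_of_card_lt hlt hkn]
      exact hkn
    · exact hle.trans (mem_Icc.1 (hmem k hk hkn)).1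
  refine ⟨fun k hk => ?_, H, H.ihAbelian_iff.2 fun j hj hjn => hessOfCode_of_card_lt hj hjn.le,
    fun k hk hkn => ?_⟩
  · match k with
    | 0 => rfl
    | 1 => simp [hn] at hk
    | i + 2 => simp [hessOfCode, show n < i + 2 by simpa using hk]
  · rcases lt_trichotomy k (#S + 1) with hlt | rfl | hgt
    · have := (mem_Icc.1 (hmem k hk (by omega))).1
      omega
    · exact lt_hessOfCode_card_succ hS (by omega)
    · rw [hessOfCode_of_card_lt hgt (by omega)]
      omega

theorem hessCode_hessOfCode (hS : S ∈ hessCodes n) : hessCode (hessOfCode n S) = S := by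
  have hcard := card_le_of_mem_hessCodes hS
  have hone : hessOfCode n S 1 = #S + 1 := rfl
  rw [hessCode, hone, Nat.add_sub_cancel]
  conv_rhs => rw [← Nat.image_range_nth_mem_finset S]
  refine image_congr fun i hi => ?_
  rw [mem_coe, mem_range] at hi
  simp only [codeSeq, hone, hessOfCode_add_two hi (show i + 2 ≤ n by omega)]
  omega

end Decoding

/-- Counting Hessenberg functions on `{1,…,n}`, normalized to vanish outside
`{1,…,n}`, whose ideal `I_h` is abelian and strictly negative
(`h(i) ≥ i+1` for `1 ≤ i ≤ n−1`): there are `2^(n−1) − (n−1)` of them. -/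
theorem stmt19 (n : ℕ) (hn : 1 ≤ n) :
    Set.ncard {h : ℕ → ℕ | (∀ i, i ∉ Set.Icc 1 n → h i = 0) ∧
        IsHessenberg n h ∧ IhAbelian n h ∧
        (∀ i, 1 ≤ i → i ≤ n - 1 → i + 1 ≤ h i)} =
      2 ^ (n - 1) - (n - 1) := by
  have hbij : Set.BijOn hessCode (abelianStrictHessenberg n) (hessCodes n) :=
    Set.InvOn.bijOn
      ⟨fun _ hh => hessOfCode_hessCode hn hh, fun _ hS => hessCode_hessOfCode hS⟩
      (fun _ hh => hessCode_mem_hessCodes hn hh) (fun _ hS => hessOfCode_mem hn hS)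
  change (abelianStrictHessenberg n).ncard = _
  rw [hbij.ncard_eq, Set.ncard_coe_finset, card_hessCodes]
end
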